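/- arXiv:1810.06707 — 8 statements merged into one kernel-verified Lean document; each statement's English description precedes it below -/
import Mathlib

section
/- Proposition 1 (equivalence of the LP relaxations of the full and reduced matching formulations): the polyhedron Q is exactly the image of the polyhedron R under the map (m, v) ↦ (z, v) with z_ℓ = Σ_{t ∈ Fin T} m_{t,ℓ}; that is, a pair (z, v) belongs to Q if and only if there exists m : Fin T → Fin L → ℝ such that (m, v) ∈ R and z_ℓ = Σ_{t ∈ Fin T} m_{t,ℓ} for every ℓ ∈ Fin L. -/
private lemma clamp_sum (T : ℕ) : ∀ x : ℝ, x ≤ T →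
    ∑ t ∈ Finset.range T, min (max (x - t) 0) 1 = max x 0 := by
  induction T with
  | zero =>
    intro x hx
    simp only [Finset.range_zero, Finset.sum_empty, Nat.cast_zero] at *
    rw [max_eq_right hx]
  | succ T ih =>
    intro x hx
    rw [Finset.sum_range_succ']
    have h1 : ∑ i ∈ Finset.range T, min (max (x - ↑(i + 1)) 0) 1
        = max (x - 1) 0 := by
      rw [← ih (x - 1) (by push_cast at hx ⊢; linarith)]
      refine Finset.sum_congr rfl fun i _ => ?_
      push_cast
      ring_nf
    rw [h1]
    simp only [Nat.cast_zero, sub_zero]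
    rcases le_total x 1 with h | h
    · rw [max_eq_right (by linarith : x - 1 ≤ 0),
        min_eq_left (max_le h zero_le_one), zero_add]
    · rw [max_eq_left (by linarith : (0:ℝ) ≤ x - 1),
        max_eq_left (by linarith : (0:ℝ) ≤ x),
        min_eq_right h]
      ring

private def gfun (t : ℕ) (x : ℝ) : ℝ := min (max x (t:ℝ)) ((t:ℝ) + 1)

private lemma gclamp (t : ℕ) (x : ℝ) :
    gfun t x = (t:ℝ) + min (max (x - t) 0) 1 := by
  unfold gfun
  rcases le_total x t with h | h
  · rw [max_eq_right h, max_eq_right (by linarith : x - t ≤ 0),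
      min_eq_left (by linarith : (t:ℝ) ≤ t + 1), min_eq_left zero_le_one]
    ring
  · rw [max_eq_left h, max_eq_left (by linarith : (0:ℝ) ≤ x - t)]
    rcases le_total x (t + 1) with h2 | h2
    · rw [min_eq_left h2, min_eq_left (by linarith : x - t ≤ 1)]
      ring
    · rw [min_eq_right h2, min_eq_right (by linarith : (1:ℝ) ≤ x - t)]

private lemma gfun_mono (t : ℕ) : Monotone (gfun t) := fun a b hab =>
  min_le_min (max_le_max hab le_rfl) le_rfl

private lemma gfun_lb (t : ℕ) (x : ℝ) : (t:ℝ) ≤ gfun t x :=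
  le_min (le_max_right _ _) (by linarith)

private lemma gfun_ub (t : ℕ) (x : ℝ) : gfun t x ≤ (t:ℝ) + 1 := min_le_right _ _

private lemma gfun_zero (t : ℕ) : gfun t 0 = (t:ℝ) := by
  unfold gfun
  rw [max_eq_right (by positivity), min_eq_left (by linarith)]

private lemma gfun_top (t : ℕ) (C : ℝ) (h : (t:ℝ) + 1 ≤ C) : gfun t C = (t:ℝ) + 1 := by
  unfold gfun
  rw [max_eq_left (by linarith), min_eq_right (by linarith)]

private lemma gfun_sum (T : ℕ) (x : ℝ) (h0 : 0 ≤ x) (hT : x ≤ T) :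
    ∑ t ∈ Finset.range T, gfun t x = x + ∑ t ∈ Finset.range T, (t:ℝ) := by
  rw [Finset.sum_congr rfl (fun t _ => gclamp t x), Finset.sum_add_distrib,
    clamp_sum T x hT, max_eq_left h0, add_comm]

/-- Proposition 1: the LP relaxation `Q` of the reduced matching formulation is exactly
the image of the LP relaxation `R` of the full formulation under the map
`(m, v) ↦ (z, v)` with `z ℓ = ∑ t, m t ℓ`. -/
theorem prop1_LP_relaxations_equivalent
    (T L P : ℕ) (hT : 0 < T) (hL : 0 < L)
    (K : Fin P → ℕ) (hK : ∀ p, 0 < K p)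
    (c : ∀ p : Fin P, Fin L → Fin (K p))
    (N : ∀ p : Fin P, Fin (K p) → ℕ)
    (hN : ∀ p, ∑ k, N p k = T)
    (Q : Set ((Fin L → ℝ) × (∀ p : Fin P, Fin (K p) → ℝ)))
    (hQ : Q = {zv | (∀ ℓ, 0 ≤ zv.1 ℓ ∧ zv.1 ℓ ≤ 1) ∧
      (∑ ℓ, zv.1 ℓ) = (T : ℝ) ∧
      ∀ p k, |(∑ ℓ ∈ Finset.univ.filter (fun ℓ => c p ℓ = k), zv.1 ℓ) - (N p k : ℝ)|
        ≤ zv.2 p k})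
    (R : Set ((Fin T → Fin L → ℝ) × (∀ p : Fin P, Fin (K p) → ℝ)))
    (hR : R = {mv | (∀ t ℓ, 0 ≤ mv.1 t ℓ ∧ mv.1 t ℓ ≤ 1) ∧
      (∀ t, (∑ ℓ, mv.1 t ℓ) = 1) ∧
      (∀ ℓ, (∑ t, mv.1 t ℓ) ≤ 1) ∧
      ∀ p k, |(∑ ℓ ∈ Finset.univ.filter (fun ℓ => c p ℓ = k), ∑ t, mv.1 t ℓ) - (N p k : ℝ)|
        ≤ mv.2 p k}) :
    ∀ (z : Fin L → ℝ) (v : ∀ p : Fin P, Fin (K p) → ℝ),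
      (z, v) ∈ Q ↔ ∃ m : Fin T → Fin L → ℝ, (m, v) ∈ R ∧ ∀ ℓ, z ℓ = ∑ t, m t ℓ := by
  subst hQ hR
  intro z v
  simp only [Set.mem_setOf_eq]
  constructor
  · rintro ⟨hbound, hsum, hdev⟩
    set Z : ℕ → ℝ := fun j => if h : j < L then z ⟨j, h⟩ else 0 with hZ
    set F : ℕ → ℝ := fun n => ∑ j ∈ Finset.range n, Z j with hF
    have hZ01 : ∀ j, 0 ≤ Z j ∧ Z j ≤ 1 := by
      intro j
      simp only [hZ]
      split
      · exact hbound _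
      · simp
    have hFmono : Monotone F := fun a b hab =>
      Finset.sum_le_sum_of_subset_of_nonneg
        (Finset.range_subset_range.2 hab) (fun i _ _ => (hZ01 i).1)
    have hF0 : F 0 = 0 := by simp [hF]
    have hFL : F L = T := by
      rw [← hsum]
      show (∑ j ∈ Finset.range L, Z j) = ∑ x : Fin L, z x
      rw [← Fin.sum_univ_eq_sum_range Z L]
      refine Finset.sum_congr rfl fun ℓ _ => ?_
      simp [hZ, ℓ.isLt]
    have hFnn : ∀ n, 0 ≤ F n := fun n => hF0 ▸ hFmono (Nat.zero_le n)
    have hFT : ∀ n, n ≤ L → F n ≤ T := fun n hn => hFL ▸ hFmono hn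
    set m : Fin T → Fin L → ℝ := fun t ℓ =>
      gfun t.val (F (ℓ.val + 1)) - gfun t.val (F ℓ.val) with hm
    have hcol : ∀ ℓ : Fin L, (∑ t, m t ℓ) = z ℓ := by
      intro ℓ
      have h1 : (∑ t : Fin T, m t ℓ)
          = ∑ t ∈ Finset.range T, (gfun t (F (ℓ.val + 1)) - gfun t (F ℓ.val)) :=
        Fin.sum_univ_eq_sum_range (fun t => gfun t (F (ℓ.val + 1)) - gfun t (F ℓ.val)) T
      have hb1 : F (ℓ.val + 1) ≤ T := hFT _ ℓ.isLt
      have hb2 : F ℓ.val ≤ T := le_trans (hFmono (Nat.le_succ _)) hb1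
      rw [h1, Finset.sum_sub_distrib, gfun_sum T _ (hFnn _) hb1,
        gfun_sum T _ (hFnn _) hb2]
      have hFd : F (ℓ.val + 1) - F ℓ.val = Z ℓ.val := by
        simp [hF, Finset.sum_range_succ]
      have hzZ : Z ℓ.val = z ℓ := by simp [hZ, ℓ.isLt]
      rw [← hzZ, ← hFd]
      ring
    have hrowsum : ∀ t : Fin T, (∑ ℓ, m t ℓ) = 1 := by
      intro t
      have h1 : (∑ ℓ : Fin L, m t ℓ)
          = ∑ j ∈ Finset.range L, (gfun t.val (F (j + 1)) - gfun t.val (F j)) :=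
        Fin.sum_univ_eq_sum_range (fun j => gfun t.val (F (j + 1)) - gfun t.val (F j)) L
      rw [h1, Finset.sum_range_sub (fun n => gfun t.val (F n)) L, hF0, hFL,
        gfun_zero, gfun_top t.val T (by exact_mod_cast Nat.succ_le_of_lt t.isLt)]
      ring
    refine ⟨m, ⟨fun t ℓ => ⟨?_, ?_⟩, hrowsum, fun ℓ => ?_, fun p k => ?_⟩,
      fun ℓ => (hcol ℓ).symm⟩
    · exact sub_nonneg.2 (gfun_mono t.val (hFmono (Nat.le_succ _)))
    · have h1 := gfun_lb t.val (F ℓ.val)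
      have h2 := gfun_ub t.val (F (ℓ.val + 1))
      simp only [hm]
      linarith
    · rw [hcol ℓ]
      exact (hbound ℓ).2
    · have hrw : (∑ ℓ ∈ Finset.univ.filter (fun ℓ => c p ℓ = k), ∑ t, m t ℓ)
          = ∑ ℓ ∈ Finset.univ.filter (fun ℓ => c p ℓ = k), z ℓ :=
        Finset.sum_congr rfl fun ℓ _ => hcol ℓ
      simpa only [hrw] using hdev p k
  · rintro ⟨m, ⟨hb, hrow, hcolle, hdev⟩, hz⟩
    refine ⟨fun ℓ => ⟨?_, ?_⟩, ?_, fun p k => ?_⟩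
    · show 0 ≤ z ℓ
      rw [hz ℓ]
      exact Finset.sum_nonneg fun t _ => (hb t ℓ).1
    · show z ℓ ≤ 1
      rw [hz ℓ]
      exact hcolle ℓ
    · show (∑ ℓ, z ℓ) = (T:ℝ)
      calc (∑ ℓ, z ℓ) = ∑ ℓ, ∑ t, m t ℓ :=
            Finset.sum_congr rfl fun ℓ _ => hz ℓ
        _ = ∑ t, ∑ ℓ, m t ℓ := Finset.sum_comm
        _ = ∑ t : Fin T, (1:ℝ) := Finset.sum_congr rfl fun t _ => hrow t
        _ = T := by simp
    · show |(∑ ℓ ∈ Finset.univ.filter (fun ℓ => c p ℓ = k), z ℓ) - (N p k : ℝ)| ≤ v p k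
      have hrw : (∑ ℓ ∈ Finset.univ.filter (fun ℓ => c p ℓ = k), z ℓ)
          = ∑ ℓ ∈ Finset.univ.filter (fun ℓ => c p ℓ = k), ∑ t, m t ℓ :=
        Finset.sum_congr rfl fun ℓ _ => hz ℓ
      rw [hrw]
      exact hdev p k
end

section
/- Fractional assignment decomposition (key construction in the proof of Proposition 1): let T and L be positive integers and let z : Fin L → ℝ satisfy 0 ≤ z_ℓ ≤ 1 for every ℓ and Σ_{ℓ ∈ Fin L} z_ℓ = T. Then there exists m : Fin T → Fin L → ℝ with 0 ≤ m_{t,ℓ} ≤ 1 for all t, ℓ, Σ_{ℓ ∈ Fin L} m_{t,ℓ} = 1 for every t ∈ Fin T, and Σ_{t ∈ Fin T} m_{t,ℓ} = z_ℓ for every ℓ ∈ Fin L. -/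
/-- Sum of unit clamps: for `0 ≤ x ≤ T`, `∑_{t<T} clamp(x - t, 0, 1) = x`. -/
lemma sum_unit_clamp (T : ℕ) : ∀ x : ℝ, 0 ≤ x → x ≤ T →
    (∑ t : Fin T, min (max (x - (t : ℝ)) 0) 1) = x := by
  induction T with
  | zero => intro x hx0 hx1; simp at hx1 ⊢; linarith
  | succ n ih =>
    intro x hx0 hx1
    rw [Fin.sum_univ_castSucc]
    simp only [Fin.coe_castSucc, Fin.val_last]
    by_cases h : x ≤ n
    · rw [ih x hx0 h]
      have : max (x - (n : ℝ)) 0 = 0 := max_eq_right (by linarith)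
      rw [this]
      simp
    · push_neg at h
      have h1 : (∑ t : Fin n, min (max (x - (t : ℝ)) 0) 1) = n := by
        rw [Finset.sum_congr rfl (fun t _ => ?_), Finset.sum_const,
          Finset.card_univ, Fintype.card_fin, nsmul_eq_mul, mul_one]
        have ht : (t : ℝ) ≤ (n : ℝ) - 1 := by
          have := t.2
          have : (t : ℝ) + 1 ≤ (n : ℝ) := by exact_mod_cast this
          linarith
        have : (1 : ℝ) ≤ x - (t : ℝ) := by linarith
        rw [max_eq_left (by linarith), min_eq_right this]
      rw [h1]
      have hc : x ≤ (n : ℝ) + 1 := by push_cast at hx1; linarith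
      rw [max_eq_left (by linarith), min_eq_left (by linarith)]
      ring

/-- Fractional assignment decomposition: any `z ∈ [0,1]^L` with coordinate sum equal to
the integer `T` can be written as the column sums of a `T × L` doubly-substochastic
fractional assignment matrix whose rows sum to 1. -/
theorem fractional_assignment_decomposition
    (T L : ℕ) (hT : 0 < T) (hL : 0 < L)
    (z : Fin L → ℝ) (hz : ∀ ℓ, 0 ≤ z ℓ ∧ z ℓ ≤ 1)
    (hsum : (∑ ℓ, z ℓ) = (T : ℝ)) :
    ∃ m : Fin T → Fin L → ℝ,
      (∀ t ℓ, 0 ≤ m t ℓ ∧ m t ℓ ≤ 1) ∧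
      (∀ t, (∑ ℓ, m t ℓ) = 1) ∧
      (∀ ℓ, (∑ t, m t ℓ) = z ℓ) := by
  -- extend z to ℕ
  set w : ℕ → ℝ := fun k => if h : k < L then z ⟨k, h⟩ else 0 with hw
  have hw0 : ∀ k, 0 ≤ w k := by
    intro k; by_cases h : k < L <;> simp [hw, h]
    exact (hz ⟨k, h⟩).1
  -- prefix sums
  set S : ℕ → ℝ := fun n => ∑ k ∈ Finset.range n, w k with hS
  have hS0 : S 0 = 0 := by simp [hS]
  have hSL : S L = T := by
    rw [hS]
    simp only
    rw [← Fin.sum_univ_eq_sum_range (fun k => w k) L, ← hsum]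
    exact Finset.sum_congr rfl (fun i _ => by simp [hw, i.2])
  have hSmono : Monotone S := by
    intro a b hab
    exact Finset.sum_le_sum_of_subset_of_nonneg (Finset.range_subset_range.mpr hab)
      (fun k _ _ => hw0 k)
  have hSnn : ∀ n, 0 ≤ S n := fun n => by
    rw [← hS0]; exact hSmono (Nat.zero_le n)
  have hSle : ∀ n, n ≤ L → S n ≤ T := fun n hn => hSL ▸ hSmono hn
  have hSstep : ∀ ℓ : Fin L, S (ℓ.val + 1) - S ℓ.val = z ℓ := by
    intro ℓ
    rw [hS]
    simp only
    rw [Finset.sum_range_succ]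
    simp [hw, ℓ.2]
  -- clamp function
  set c : Fin T → ℝ → ℝ := fun t x => min (max x (t : ℝ)) ((t : ℝ) + 1) with hc
  have hcmono : ∀ t : Fin T, Monotone (c t) := by
    intro t a b hab
    exact min_le_min (max_le_max hab le_rfl) le_rfl
  have hclb : ∀ (t : Fin T) (x : ℝ), (t : ℝ) ≤ c t x := by
    intro t x
    exact le_min (le_max_right _ _) (by linarith)
  have hcub : ∀ t x, c t x ≤ (t : ℝ) + 1 := fun t x => min_le_right _ _
  have hc0 : ∀ t : Fin T, c t 0 = (t : ℝ) := by
    intro t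
    have : max (0 : ℝ) (t : ℝ) = (t : ℝ) := max_eq_right (by positivity)
    rw [hc]; simp only [this]
    exact min_eq_left (by linarith)
  have hcT : ∀ t : Fin T, c t (T : ℝ) = (t : ℝ) + 1 := by
    intro t
    have ht : (t : ℝ) + 1 ≤ (T : ℝ) := by exact_mod_cast t.2
    rw [hc]; simp only
    rw [max_eq_left (by linarith), min_eq_right ht]
  -- shift identity
  have hshift : ∀ (t : Fin T) (x : ℝ), c t x = (t : ℝ) + min (max (x - (t : ℝ)) 0) 1 := by
    intro t x
    rw [hc]; simp only
    rcases le_total x (t : ℝ) with h | h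
    · rw [max_eq_right h, max_eq_right (by linarith), min_eq_left (by linarith),
        min_eq_left (by linarith)]
      ring
    · rw [max_eq_left h, max_eq_left (by linarith)]
      rcases le_total x ((t : ℝ) + 1) with h2 | h2
      · rw [min_eq_left h2, min_eq_left (by linarith)]; ring
      · rw [min_eq_right h2, min_eq_right (by linarith)]
  -- sum of clamps
  have hsumc : ∀ x : ℝ, 0 ≤ x → x ≤ T →
      (∑ t : Fin T, c t x) = (∑ t : Fin T, (t : ℝ)) + x := by
    intro x hx0 hx1
    rw [Finset.sum_congr rfl (fun t _ => hshift t x), Finset.sum_add_distrib,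
      sum_unit_clamp T x hx0 hx1]
  refine ⟨fun t ℓ => c t (S (ℓ.val + 1)) - c t (S ℓ.val), ?_, ?_, ?_⟩
  · intro t ℓ
    dsimp only
    constructor
    · have : S ℓ.val ≤ S (ℓ.val + 1) := hSmono (Nat.le_succ _)
      linarith [hcmono t this]
    · linarith [hclb t (S ℓ.val), hcub t (S (ℓ.val + 1))]
  · intro t
    have : (∑ ℓ : Fin L, (c t (S (ℓ.val + 1)) - c t (S ℓ.val)))
        = ∑ k ∈ Finset.range L, (c t (S (k + 1)) - c t (S k)) := by
      exact Fin.sum_univ_eq_sum_range (fun k => c t (S (k + 1)) - c t (S k)) L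
    rw [this, Finset.sum_range_sub (fun k => c t (S k)), hS0, hSL, hcT, hc0]
    ring
  · intro ℓ
    dsimp only
    rw [Finset.sum_sub_distrib,
      hsumc (S (ℓ.val + 1)) (hSnn _) (hSle _ ℓ.2),
      hsumc (S ℓ.val) (hSnn _) (hSle _ (le_of_lt ℓ.2))]
    have := hSstep ℓ
    linarith
end

section
/- Proposition 2, case 1, for the reduced formulation: if P ≤ 2, then every extreme point (z, v) of the polyhedron Q is integral, i.e., z_ℓ ∈ {0, 1} for every ℓ ∈ Fin L and v_{p,k} is an integer for every p ∈ Fin P and k ∈ Fin K_p. -/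
/-!
At an extreme point `(z, v)` every `v p k` sits at its lower bound `|∑_{ℓ ∈ L_{p,k}} z ℓ - N p k|`,
which is an integer once `z` is `0/1`. Suppose the set `F` of fractional coordinates of `z` is
nonempty. For each covariate, let the units of a tight category (one with `∑ z = N`) form a class
and all remaining units one further class: every class has an integral `z`-sum, so none meets `F`
in exactly one unit. Each of the at most two partitions therefore has at most `|F| / 2` classes
meeting `F`, and as both partitions add up to the same total, a dimension count gives a nonzero `δ`
supported on `F` with zero sum over every class. Moving `z` by `±tδ`, and `v` along with the
non-tight deviations (affine in `t` near `0`), stays in `Q` and contradicts extremality.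
-/

open Finset Filter Topology

theorem eq_zero_of_add_mem_of_sub_mem_of_mem_extremePoints {E : Type*} [AddCommGroup E]
    [Module ℝ E] {A : Set E} {x d : E} (hx : x ∈ A.extremePoints ℝ) (hadd : x + d ∈ A)
    (hsub : x - d ∈ A) : d = 0 := by
  have hseg : x ∈ openSegment ℝ (x + d) (x - d) :=
    ⟨1 / 2, 1 / 2, by norm_num, by norm_num, by norm_num, by module⟩
  simpa using hx.2 hadd hsub hseg

theorem eq_zero_of_eventually_add_smul_mem_of_mem_extremePoints {E : Type*} [AddCommGroup E]
    [Module ℝ E] {A : Set E} {x d : E} (hx : x ∈ A.extremePoints ℝ)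
    (h : ∀ᶠ t in 𝓝 (0 : ℝ), x + t • d ∈ A) : d = 0 := by
  obtain ⟨ε, hε, hball⟩ := Metric.eventually_nhds_iff.1 h
  have hdist : ∀ σ : ℝ, |σ| = 1 → dist (σ * (ε / 2)) 0 < ε := fun σ hσ => by
    rw [Real.dist_0_eq_abs, abs_mul, hσ, abs_of_pos (by positivity)]; linarith
  have hadd := hball (hdist 1 (by simp))
  have hsub := hball (hdist (-1) (by simp))
  rw [neg_one_mul, neg_smul, ← sub_eq_add_neg] at hsub
  rw [one_mul] at hadd
  have := eq_zero_of_add_mem_of_sub_mem_of_mem_extremePoints hx hadd hsub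
  exact (smul_eq_zero.1 this).resolve_left (by positivity)

theorem tendsto_add_mul_nhds_zero (a b : ℝ) :
    Tendsto (fun t : ℝ => a + t * b) (𝓝 0) (𝓝 a) := by
  have : Continuous fun t : ℝ => a + t * b := by fun_prop
  simpa using this.tendsto 0

theorem eventually_abs_add_mul_eq {a b : ℝ} (h : a = 0 → b = 0) :
    ∀ᶠ t in 𝓝 (0 : ℝ), |a + t * b| = |a| + t * (Real.sign a * b) := by
  rcases lt_trichotomy a 0 with ha | rfl | ha
  · filter_upwards [(tendsto_add_mul_nhds_zero a b).eventually (gt_mem_nhds ha)] with t ht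
    rw [abs_of_neg ht, abs_of_neg ha, Real.sign_of_neg ha]
    ring
  · simp [h rfl]
  · filter_upwards [(tendsto_add_mul_nhds_zero a b).eventually (lt_mem_nhds ha)] with t ht
    rw [abs_of_pos ht, abs_of_pos ha, Real.sign_of_pos ha]
    ring

theorem eventually_add_mul_mem_Icc {a b z d : ℝ} (hz : z ∈ Set.Icc a b)
    (hd : d ≠ 0 → z ∈ Set.Ioo a b) : ∀ᶠ t in 𝓝 (0 : ℝ), z + t * d ∈ Set.Icc a b := by
  by_cases hd0 : d = 0
  · simp [hd0, hz]
  · exact ((tendsto_add_mul_nhds_zero z d).eventually (Ioo_mem_nhds (hd hd0).1 (hd hd0).2)).mono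
      fun _ h => Set.Ioo_subset_Icc_self h

theorem exists_int_sum_eq {ι : Type*} {s : Finset ι} {z : ι → ℝ}
    (h : ∀ i ∈ s, ∃ n : ℤ, z i = n) : ∃ n : ℤ, ∑ i ∈ s, z i = n :=
  Finset.sum_induction z (fun x => ∃ n : ℤ, x = n)
    (fun _ _ ⟨m, hm⟩ ⟨n, hn⟩ => ⟨m + n, by push_cast [hm, hn]; rfl⟩) ⟨0, by simp⟩ h

theorem card_filter_mem_Ioo_ne_one {ι : Type*} {s : Finset ι} {z : ι → ℝ}
    (hz : ∀ i, z i ∈ Set.Icc 0 1) (hs : ∃ n : ℤ, ∑ i ∈ s, z i = n) :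
    #(s.filter (fun i => z i ∈ Set.Ioo 0 1)) ≠ 1 := by
  intro hcard
  obtain ⟨i, hi⟩ := card_eq_one.1 hcard
  obtain ⟨n, hn⟩ := hs
  obtain ⟨m, hm⟩ : ∃ m : ℤ, ∑ j ∈ s.filter (fun j => z j ∉ Set.Ioo 0 1), z j = m := by
    refine exists_int_sum_eq fun j hj => ?_
    rcases (hz j).1.eq_or_lt with h0 | h0
    · exact ⟨0, by simp [← h0]⟩
    rcases (hz j).2.eq_or_lt with h1 | h1
    · exact ⟨1, by simp [h1]⟩
    · exact absurd ⟨h0, h1⟩ (mem_filter.1 hj).2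
  have hzi : z i = ((n - m : ℤ) : ℝ) := by
    rw [← sum_filter_add_sum_filter_not s (fun j => z j ∈ Set.Ioo 0 1), hi, sum_singleton, hm] at hn
    push_cast; linarith
  have hmem : z i ∈ Set.Ioo 0 1 := (mem_filter.1 (hi ▸ mem_singleton_self i : i ∈ _)).2
  rw [hzi] at hmem
  obtain ⟨h0, h1⟩ := hmem
  norm_cast at h0 h1
  omega

theorem filter_guard_mem_eq_some {ι κ : Type*} [DecidableEq κ] (s : Finset ι) (c : ι → κ)
    (t : Finset κ) (k : κ) :
    s.filter (fun i => Option.guard (· ∈ t) (c i) = some k) = s.filter (fun i => c i = k ∧ k ∈ t) :=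
  filter_congr fun i _ => by
    rw [Option.guard_eq_some_iff, decide_eq_true_iff]
    exact ⟨fun ⟨h, hc⟩ => ⟨h, h ▸ hc⟩, fun ⟨h, hc⟩ => ⟨h, h ▸ hc⟩⟩

theorem exists_int_sum_guard_fiber {ι κ : Type*} [Fintype ι] [DecidableEq κ] {c : ι → κ}
    {t : Finset κ} {z : ι → ℝ} (htot : ∃ n : ℤ, ∑ i, z i = n)
    (ht : ∀ k ∈ t, ∃ n : ℤ, ∑ i with c i = k, z i = n) (o : Option κ) :
    ∃ n : ℤ, ∑ i with Option.guard (· ∈ t) (c i) = o, z i = n := by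
  cases o with
  | none =>
    obtain ⟨n, hn⟩ := htot
    obtain ⟨m, hm⟩ := exists_int_sum_eq ht
    refine ⟨n - m, ?_⟩
    rw [sum_fiberwise_eq_sum_filter] at hm
    rw [← sum_filter_add_sum_filter_not univ (fun i => c i ∈ t), hm] at hn
    simp only [Option.guard_eq_none_iff, decide_eq_false_iff_not]
    push_cast
    linarith
  | some k =>
    rw [filter_guard_mem_eq_some]
    by_cases hk : k ∈ t
    · simpa [hk] using ht k hk
    · exact ⟨0, by simp [hk]⟩

theorem two_mul_card_image_le {ι α : Type*} [DecidableEq α] {F : Finset ι} {f : ι → α}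
    (hf : ∀ a, #(F.filter (f · = a)) ≠ 1) : 2 * #(F.image f) ≤ #F := by
  rw [card_eq_sum_card_image f F, mul_comm, ← smul_eq_mul, ← sum_const]
  refine sum_le_sum fun a ha => ?_
  obtain ⟨i, hi, rfl⟩ := mem_image.1 ha
  have : 0 < #(F.filter (f · = f i)) := card_pos.2 ⟨i, mem_filter.2 ⟨hi, rfl⟩⟩
  have := hf (f i)
  omega

theorem sum_fiber_eq_zero_of_notMem_image {ι γ : Type*} [Fintype ι] [DecidableEq γ]
    {F : Finset ι} {δ : ι → ℝ} (hδ : ∀ i ∉ F, δ i = 0) (h : ι → γ) {x : γ}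
    (hx : x ∉ F.image h) : ∑ i with h i = x, δ i = 0 :=
  sum_eq_zero fun i hi => hδ i fun hiF => hx (mem_image.2 ⟨i, hiF, (mem_filter.1 hi).2⟩)

theorem sum_eq_zero_of_forall_sum_fiber_eq_zero {ι γ : Type*} [Fintype ι] [DecidableEq γ]
    {δ : ι → ℝ} (h : ι → γ) (hδ : ∀ x, ∑ i with h i = x, δ i = 0) : ∑ i, δ i = 0 := by
  rw [← sum_fiberwise_of_maps_to (fun i _ => mem_image_of_mem h (mem_univ i))]
  exact sum_eq_zero fun x _ => hδ x

theorem sum_fiber_eq_zero_of_forall_ne {ι γ : Type*} [Fintype ι] [DecidableEq γ] {δ : ι → ℝ}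
    (h : ι → γ) (hsum : ∑ i, δ i = 0) {x₀ : γ} (hne : ∀ x ≠ x₀, ∑ i with h i = x, δ i = 0)
    (x : γ) : ∑ i with h i = x, δ i = 0 := by
  obtain rfl | hx := eq_or_ne x x₀
  · rwa [← sum_fiberwise_of_maps_to (fun i _ => mem_image_of_mem h (mem_univ i)),
      sum_eq_single x (fun y _ hy => hne y hy) fun hx =>
        sum_fiber_eq_zero_of_notMem_image (fun i hi => absurd (mem_univ i) hi) h hx] at hsum
  · exact hne x hx

theorem exists_ne_zero_sum_fiber_eq_zero_of_card_image_add_le {ι α β : Type*} [Fintype ι]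
    [DecidableEq ι] [DecidableEq α] [DecidableEq β] {F : Finset ι} {f : ι → α} {g : ι → β}
    {a₀ : α} (ha₀ : a₀ ∈ F.image f) (hcard : #(F.image f) + #(F.image g) ≤ #F) :
    ∃ δ : ι → ℝ, δ ≠ 0 ∧ (∀ i ∉ F, δ i = 0) ∧ (∀ a ≠ a₀, ∑ i with f i = a, δ i = 0) ∧
      ∀ b, ∑ i with g i = b, δ i = 0 := by
  let Φ : (ι → ℝ) →ₗ[ℝ] ((Fᶜ : Finset ι) → ℝ) × ((F.image f).erase a₀ → ℝ) × (F.image g → ℝ) :=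
    (LinearMap.pi fun i => LinearMap.proj i.1).prod
      ((LinearMap.pi fun a => ∑ i with f i = a.1, LinearMap.proj i).prod
        (LinearMap.pi fun b => ∑ i with g i = b.1, LinearMap.proj i))
  have hrank : Module.finrank ℝ (((Fᶜ : Finset ι) → ℝ) × ((F.image f).erase a₀ → ℝ) ×
      (F.image g → ℝ)) < Module.finrank ℝ (ι → ℝ) := by
    have := card_erase_add_one ha₀
    have := card_le_univ F
    simp only [Module.finrank_prod, Module.finrank_fintype_fun_eq_card, Fintype.card_coe,
      card_compl]
    omega
  obtain ⟨δ, hδker, hδ0⟩ :=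
    Submodule.exists_mem_ne_zero_of_ne_bot (LinearMap.ker_ne_bot_of_finrank_lt hrank)
  have hΦ : Φ δ = 0 := LinearMap.mem_ker.1 hδker
  have hout : ∀ i ∉ F, δ i = 0 := fun i hi => by
    simpa [Φ] using congrFun (congrArg Prod.fst hΦ) ⟨i, mem_compl.2 hi⟩
  refine ⟨δ, hδ0, hout, fun a ha => ?_, fun b => ?_⟩
  · by_cases ha' : a ∈ F.image f
    · simpa [Φ] using congrFun (congrArg (Prod.fst ∘ Prod.snd) hΦ) ⟨a, mem_erase.2 ⟨ha, ha'⟩⟩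
    · exact sum_fiber_eq_zero_of_notMem_image hout f ha'
  · by_cases hb : b ∈ F.image g
    · simpa [Φ] using congrFun (congrArg (Prod.snd ∘ Prod.snd) hΦ) ⟨b, hb⟩
    · exact sum_fiber_eq_zero_of_notMem_image hout g hb

theorem exists_ne_zero_sum_fiber_eq_zero {ι α β : Type*} [Fintype ι] [DecidableEq ι]
    [DecidableEq α] [DecidableEq β] {F : Finset ι} (hF : F.Nonempty) (f : ι → α) (g : ι → β)
    (hf : ∀ a, #(F.filter (f · = a)) ≠ 1) (hg : ∀ b, #(F.filter (g · = b)) ≠ 1) :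
    ∃ δ : ι → ℝ, δ ≠ 0 ∧ (∀ i ∉ F, δ i = 0) ∧ (∀ a, ∑ i with f i = a, δ i = 0) ∧
      ∀ b, ∑ i with g i = b, δ i = 0 := by
  obtain ⟨i₀, hi₀⟩ := hF
  obtain ⟨δ, hδ0, hout, hf', hg'⟩ := exists_ne_zero_sum_fiber_eq_zero_of_card_image_add_le
    (g := g) (mem_image_of_mem f hi₀)
    (by linarith [two_mul_card_image_le hf, two_mul_card_image_le hg])
  exact ⟨δ, hδ0, hout,
    sum_fiber_eq_zero_of_forall_ne f (sum_eq_zero_of_forall_sum_fiber_eq_zero g hg') hf', hg'⟩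

theorem exists_ne_zero_sum_fiber_eq_zero_of_le_two {ι : Type*} [Fintype ι] [DecidableEq ι]
    {P : ℕ} (hP : P ≤ 2) {α : Fin P → Type*} [∀ p, DecidableEq (α p)] {F : Finset ι}
    (hF : F.Nonempty) (hF₁ : #F ≠ 1) (f : ∀ p, ι → α p)
    (hf : ∀ p a, #(F.filter (f p · = a)) ≠ 1) :
    ∃ δ : ι → ℝ, δ ≠ 0 ∧ (∀ i ∉ F, δ i = 0) ∧ ∑ i, δ i = 0 ∧
      ∀ p a, ∑ i with f p i = a, δ i = 0 := by
  obtain _ | _ | _ | P := P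
  · obtain ⟨δ, hδ, hF, hsum, -⟩ := exists_ne_zero_sum_fiber_eq_zero hF (fun _ => ()) (fun _ => ())
      (fun _ => by simpa using hF₁) (fun _ => by simpa using hF₁)
    exact ⟨δ, hδ, hF, by simpa using hsum (), fun p => p.elim0⟩
  · obtain ⟨δ, hδ, hF, hsum, -⟩ := exists_ne_zero_sum_fiber_eq_zero hF (f 0) (f 0) (hf 0) (hf 0)
    exact ⟨δ, hδ, hF, sum_eq_zero_of_forall_sum_fiber_eq_zero _ hsum, Fin.forall_fin_one.2 hsum⟩
  · obtain ⟨δ, hδ, hF, hsum₀, hsum₁⟩ :=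
      exists_ne_zero_sum_fiber_eq_zero hF (f 0) (f 1) (hf 0) (hf 1)
    exact ⟨δ, hδ, hF, sum_eq_zero_of_forall_sum_fiber_eq_zero _ hsum₀,
      Fin.forall_fin_two.2 ⟨hsum₀, hsum₁⟩⟩
  · omega

section

variable {ι π : Type*} [Fintype ι] {κ : π → Type*} [∀ p, DecidableEq (κ p)]

def reducedPolyhedron (T : ℕ) (c : ∀ p, ι → κ p) (N : ∀ p, κ p → ℕ) :
    Set ((ι → ℝ) × (∀ p, κ p → ℝ)) :=
  {zv | (∀ ℓ, 0 ≤ zv.1 ℓ ∧ zv.1 ℓ ≤ 1) ∧ (∑ ℓ, zv.1 ℓ) = (T : ℝ) ∧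
    ∀ p k, |(∑ ℓ ∈ univ.filter (fun ℓ => c p ℓ = k), zv.1 ℓ) - (N p k : ℝ)| ≤ zv.2 p k}

namespace reducedPolyhedron

variable {T : ℕ} {c : ∀ p, ι → κ p} {N : ∀ p, κ p → ℕ} {z : ι → ℝ} {v : ∀ p, κ p → ℝ}

theorem snd_eq_abs_of_mem_extremePoints (h : (z, v) ∈ (reducedPolyhedron T c N).extremePoints ℝ)
    (p : π) (k : κ p) : v p k = |∑ ℓ with c p ℓ = k, z ℓ - N p k| := by
  obtain ⟨hz, hsum, hv⟩ := h.1
  dsimp only at hz hsum hv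
  set slack : ∀ p, κ p → ℝ := fun p k => v p k - |∑ ℓ with c p ℓ = k, z ℓ - N p k|
  have hslack : slack = 0 := by
    refine congrArg Prod.snd
      (eq_zero_of_add_mem_of_sub_mem_of_mem_extremePoints (d := (0, slack)) h ?_ ?_)
    · refine ⟨by simpa using hz, by simpa using hsum, fun p k => ?_⟩
      have := hv p k
      simp only [Prod.fst_add, Prod.snd_add, Pi.add_apply, Pi.zero_apply, add_zero, slack]
      linarith
    · refine ⟨by simpa using hz, by simpa using hsum, fun p k => ?_⟩
      simp [slack]
  simpa [slack, sub_eq_zero] using congrFun (congrFun hslack p) k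

theorem eq_zero_of_mem_extremePoints [Finite π] [∀ p, Finite (κ p)]
    (h : (z, v) ∈ (reducedPolyhedron T c N).extremePoints ℝ) {δ : ι → ℝ}
    (hδ : ∀ ℓ, δ ℓ ≠ 0 → z ℓ ∈ Set.Ioo 0 1) (hδsum : ∑ ℓ, δ ℓ = 0)
    (htight : ∀ p k, ∑ ℓ with c p ℓ = k, z ℓ = N p k → ∑ ℓ with c p ℓ = k, δ ℓ = 0) :
    δ = 0 := by
  obtain ⟨hz, hsum, hv⟩ := h.1
  dsimp only at hz hsum hv
  -- near `t = 0`, `|∑ z - N p k|` is affine along `δ`, with slope `w p k`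
  set w : ∀ p, κ p → ℝ := fun p k =>
    Real.sign (∑ ℓ with c p ℓ = k, z ℓ - N p k) * ∑ ℓ with c p ℓ = k, δ ℓ
  refine congrArg Prod.fst (eq_zero_of_eventually_add_smul_mem_of_mem_extremePoints
    (d := (δ, w)) h ?_)
  have hbox := eventually_all.2 fun ℓ => eventually_add_mul_mem_Icc (hz ℓ) (hδ ℓ)
  have habs := eventually_all.2 fun p => eventually_all.2 fun k =>
    eventually_abs_add_mul_eq (fun h => htight p k (sub_eq_zero.1 h))
  filter_upwards [hbox, habs] with t hbox habs
  refine ⟨hbox, ?_, fun p k => ?_⟩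
  · simp [sum_add_distrib, ← mul_sum, hsum, hδsum]
  · have := hv p k
    simp only [Prod.fst_add, Prod.snd_add, Prod.smul_mk, Pi.add_apply, Pi.smul_apply,
      smul_eq_mul, sum_add_distrib, ← mul_sum]
    rw [add_sub_right_comm, habs p k]
    simp only [w]
    linarith

end reducedPolyhedron

end

theorem reducedPolyhedron.fst_eq_zero_or_one_of_mem_extremePoints {ι : Type*} [Fintype ι]
    {P : ℕ} (hP : P ≤ 2)
    {κ : Fin P → Type*} [∀ p, Fintype (κ p)] [∀ p, DecidableEq (κ p)] {T : ℕ}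
    {c : ∀ p, ι → κ p} {N : ∀ p, κ p → ℕ} {z : ι → ℝ} {v : ∀ p, κ p → ℝ}
    (h : (z, v) ∈ (reducedPolyhedron T c N).extremePoints ℝ) (ℓ : ι) : z ℓ = 0 ∨ z ℓ = 1 := by
  classical
  obtain ⟨hz, hsum, -⟩ := h.1
  dsimp only at hz hsum
  have hz' : ∀ ℓ, z ℓ ∈ Set.Icc 0 1 := hz
  by_contra hℓ
  set F := univ.filter fun ℓ => z ℓ ∈ Set.Ioo 0 1
  have hFne : F.Nonempty := ⟨ℓ, mem_filter.2 ⟨mem_univ ℓ,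
    (hz ℓ).1.lt_of_ne fun h => hℓ (.inl h.symm), (hz ℓ).2.lt_of_ne fun h => hℓ (.inr h)⟩⟩
  have hTint : ∃ n : ℤ, ∑ ℓ, z ℓ = n := ⟨T, by simpa using hsum⟩
  -- classify units by their category, merging all non-tight categories into `none`
  let tight p := univ.filter fun k => ∑ ℓ with c p ℓ = k, z ℓ = N p k
  let f p ℓ := Option.guard (· ∈ tight p) (c p ℓ)
  have hf : ∀ p o, #(F.filter (f p · = o)) ≠ 1 := fun p o => by
    rw [filter_comm]
    exact card_filter_mem_Ioo_ne_one hz' (exists_int_sum_guard_fiber hTint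
      (fun k hk => ⟨N p k, by simpa using (mem_filter.1 hk).2⟩) o)
  obtain ⟨δ, hδ0, hδF, hδsum, hδfiber⟩ := exists_ne_zero_sum_fiber_eq_zero_of_le_two hP hFne
    (card_filter_mem_Ioo_ne_one hz' hTint) f hf
  refine hδ0 (eq_zero_of_mem_extremePoints h (fun ℓ hℓ => ?_) hδsum fun p k hk => ?_)
  · by_contra hℓF
    exact hℓ (hδF ℓ fun hF => hℓF (mem_filter.1 hF).2)
  · have hkt : k ∈ tight p := mem_filter.2 ⟨mem_univ k, hk⟩
    have := hδfiber p (some k)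
    rwa [filter_guard_mem_eq_some, filter_congr fun ℓ _ => and_iff_left hkt] at this

theorem prop2_case1_reduced_integral_general
    (T L P : ℕ) (hP : P ≤ 2)
    (K : Fin P → ℕ)
    (c : ∀ p : Fin P, Fin L → Fin (K p))
    (N : ∀ p : Fin P, Fin (K p) → ℕ)
    (Q : Set ((Fin L → ℝ) × (∀ p : Fin P, Fin (K p) → ℝ)))
    (hQ : Q = {zv | (∀ ℓ, 0 ≤ zv.1 ℓ ∧ zv.1 ℓ ≤ 1) ∧
      (∑ ℓ, zv.1 ℓ) = (T : ℝ) ∧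
      ∀ p k, |(∑ ℓ ∈ Finset.univ.filter (fun ℓ => c p ℓ = k), zv.1 ℓ) - (N p k : ℝ)|
        ≤ zv.2 p k}) :
    ∀ zv ∈ Set.extremePoints ℝ Q,
      (∀ ℓ, zv.1 ℓ = 0 ∨ zv.1 ℓ = 1) ∧
      (∀ p k, ∃ n : ℤ, zv.2 p k = (n : ℝ)) := by
  subst hQ
  rintro ⟨z, v⟩ h
  change (z, v) ∈ (reducedPolyhedron T c N).extremePoints ℝ at h
  have hz := reducedPolyhedron.fst_eq_zero_or_one_of_mem_extremePoints hP h
  refine ⟨hz, fun p k => ?_⟩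
  obtain ⟨n, hn⟩ : ∃ n : ℤ, ∑ ℓ with c p ℓ = k, z ℓ = n :=
    exists_int_sum_eq fun ℓ _ => (hz ℓ).elim (fun h => ⟨0, by simp [h]⟩) fun h => ⟨1, by simp [h]⟩
  refine ⟨|n - N p k|, ?_⟩
  dsimp only
  rw [reducedPolyhedron.snd_eq_abs_of_mem_extremePoints h, hn]
  push_cast
  rfl

/-- Proposition 2, case 1, reduced formulation: with at most two covariates, every
extreme point of the polyhedron `Q` is integral. -/
theorem prop2_case1_reduced_integral
    (T L P : ℕ) (hT : 0 < T) (hL : 0 < L) (hP : P ≤ 2)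
    (K : Fin P → ℕ) (hK : ∀ p, 0 < K p)
    (c : ∀ p : Fin P, Fin L → Fin (K p))
    (N : ∀ p : Fin P, Fin (K p) → ℕ)
    (hN : ∀ p, ∑ k, N p k = T)
    (Q : Set ((Fin L → ℝ) × (∀ p : Fin P, Fin (K p) → ℝ)))
    (hQ : Q = {zv | (∀ ℓ, 0 ≤ zv.1 ℓ ∧ zv.1 ℓ ≤ 1) ∧
      (∑ ℓ, zv.1 ℓ) = (T : ℝ) ∧
      ∀ p k, |(∑ ℓ ∈ Finset.univ.filter (fun ℓ => c p ℓ = k), zv.1 ℓ) - (N p k : ℝ)|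
        ≤ zv.2 p k}) :
    ∀ zv ∈ Set.extremePoints ℝ Q,
      (∀ ℓ, zv.1 ℓ = 0 ∨ zv.1 ℓ = 1) ∧
      (∀ p k, ∃ n : ℤ, zv.2 p k = (n : ℝ)) :=
  prop2_case1_reduced_integral_general T L P hP K c N Q hQ
end

section
/- Proposition 2, case 2, for the reduced formulation: if the covariates are nested, then every extreme point (z, v) of the polyhedron Q is integral, i.e., z_ℓ ∈ {0, 1} for every ℓ ∈ Fin L and v_{p,k} is an integer for every p ∈ Fin P and k ∈ Fin K_p. -/
/-!
At an extreme point of `Q`, each `v_{p,k}` equals the deviation `|∑_{ℓ ∈ L_{p,k}} z_ℓ - N_{p,k}|`: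
otherwise `v` is the midpoint of two admissible choices. For `z`, call a cell tight when its
deviation vanishes. Nestedness makes the cells a laminar family, and the tight cells together
with `Fin L` have integral `z`-sums. If `z` has a fractional entry, a member of this family with
the fewest fractional entries has at least two of them, say `a` and `b`, and no member of the
family separates `a` from `b`. Shifting a small amount of `z` from `b` to `a` (or back), and
adjusting `v` along, then stays in `Q`, so `(z, v)` is not extreme. Once `z` is a `0/1` vector,
the deviations, hence `v`, are integers.
-/

open Finset Filter Topology

theorem eq_zero_of_add_mem_of_sub_mem_extremePoints {𝕜 E : Type*} [Ring 𝕜] [LinearOrder 𝕜]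
    [IsStrictOrderedRing 𝕜] [Invertible (2 : 𝕜)] [AddCommGroup E] [Module 𝕜 E]
    {A : Set E} {x d : E} (hx : x ∈ A.extremePoints 𝕜) (h₁ : x + d ∈ A) (h₂ : x - d ∈ A) :
    d = 0 :=
  add_eq_left.mp (hx.2 h₁ h₂ (mem_openSegment_add_sub x d))

theorem abs_add_eq_of_abs_le {α : Type*} [CommRing α] [LinearOrder α] [IsStrictOrderedRing α]
    {s δ : α} (h : |δ| ≤ |s|) : |s + δ| = |s| + SignType.sign s * δ := by
  rcases lt_trichotomy s 0 with hs | rfl | hs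
  · rw [abs_of_neg hs] at h ⊢
    rw [sign_neg hs, abs_of_nonpos (by linarith [le_abs_self δ])]
    simp only [SignType.coe_neg_one]
    ring
  · simp_all
  · rw [abs_of_pos hs] at h ⊢
    rw [sign_pos hs, abs_of_nonneg (by linarith [neg_abs_le δ])]
    simp only [SignType.coe_one]
    ring

theorem exists_nat_sum_eq_of_forall_eq_zero_or_one {ι : Type*} {z : ι → ℝ} {S : Finset ι}
    (h : ∀ i ∈ S, z i = 0 ∨ z i = 1) : ∃ n : ℕ, ∑ i ∈ S, z i = n :=
  ⟨∑ i ∈ S, if z i = 1 then 1 else 0, by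
    push_cast
    exact sum_congr rfl fun i hi => by rcases h i hi with h | h <;> simp [h]⟩

section Laminar

variable {ι : Type*} {z : ι → ℝ}

theorem one_lt_card_filter_Ioo_of_sum_eq_intCast {S : Finset ι}
    (hbox : ∀ i ∈ S, z i ∈ Set.Icc 0 1) {m : ℤ} (hm : ∑ i ∈ S, z i = m)
    (hne : {i ∈ S | z i ∈ Set.Ioo 0 1}.Nonempty) : 1 < #{i ∈ S | z i ∈ Set.Ioo 0 1} := by
  by_contra! hle
  obtain ⟨a, ha⟩ := card_eq_one.mp (le_antisymm hle hne.card_pos)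
  have hint : ∀ i ∈ {i ∈ S | z i ∉ Set.Ioo 0 1}, z i = 0 ∨ z i = 1 := by
    intro i hi
    rw [mem_filter] at hi
    have := hbox i hi.1
    simp only [Set.mem_Ioo, Set.mem_Icc, not_and_or, not_lt] at hi this
    rcases hi.2 with h | h
    · exact .inl (le_antisymm h this.1)
    · exact .inr (le_antisymm this.2 h)
  obtain ⟨n, hn⟩ := exists_nat_sum_eq_of_forall_eq_zero_or_one hint
  have hza : z a = ((m - n : ℤ) : ℝ) := by
    rw [← sum_filter_add_sum_filter_not S (fun i => z i ∈ Set.Ioo 0 1), ha, sum_singleton,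
      hn] at hm
    push_cast
    linarith
  have ha' : z a ∈ Set.Ioo 0 1 := (mem_filter.mp (ha.ge (mem_singleton_self a))).2
  rw [hza, Set.mem_Ioo] at ha'
  obtain ⟨h0, h1⟩ := ha'
  have : (0 : ℤ) < m - n := by exact_mod_cast h0
  have : m - n < (1 : ℤ) := by exact_mod_cast h1
  omega

theorem exists_ne_forall_mem_iff_of_laminar (𝒯 : Set (Finset ι))
    (hlam : ∀ S ∈ 𝒯, ∀ S' ∈ 𝒯, S ⊆ S' ∨ S' ⊆ S ∨ Disjoint S S')
    (hint : ∀ S ∈ 𝒯, ∃ m : ℤ, ∑ i ∈ S, z i = m) (hbox : ∀ i, z i ∈ Set.Icc 0 1)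
    {S₁ : Finset ι} (hS₁ : S₁ ∈ 𝒯) (hfrac : {i ∈ S₁ | z i ∈ Set.Ioo 0 1}.Nonempty) :
    ∃ a b, a ≠ b ∧ z a ∈ Set.Ioo 0 1 ∧ z b ∈ Set.Ioo 0 1 ∧ ∀ S ∈ 𝒯, (a ∈ S ↔ b ∈ S) := by
  obtain ⟨S₀, ⟨hS₀, hne⟩, hmin⟩ := (measure fun S => #{i ∈ S | z i ∈ Set.Ioo 0 1}).wf.has_min
    {S | S ∈ 𝒯 ∧ {i ∈ S | z i ∈ Set.Ioo 0 1}.Nonempty} ⟨S₁, hS₁, hfrac⟩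
  obtain ⟨m, hm⟩ := hint S₀ hS₀
  obtain ⟨a, ha, b, hb, hab⟩ :=
    one_lt_card.mp (one_lt_card_filter_Ioo_of_sum_eq_intCast (fun i _ => hbox i) hm hne)
  have key : ∀ S ∈ 𝒯, ∀ x ∈ {i ∈ S₀ | z i ∈ Set.Ioo 0 1}, ∀ y ∈ {i ∈ S₀ | z i ∈ Set.Ioo 0 1},
      x ∈ S → y ∈ S := by
    intro S hS x hx y hy hxS
    rw [mem_filter] at hx hy
    rcases hlam S hS S₀ hS₀ with hsub | hsup | hdisj
    · have hsub' : {i ∈ S | z i ∈ Set.Ioo 0 1} ⊆ {i ∈ S₀ | z i ∈ Set.Ioo 0 1} :=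
        filter_subset_filter _ hsub
      have hSne : {i ∈ S | z i ∈ Set.Ioo 0 1}.Nonempty := ⟨x, mem_filter.mpr ⟨hxS, hx.2⟩⟩
      have heq := eq_of_subset_of_card_le hsub' (not_lt.mp (hmin S ⟨hS, hSne⟩))
      exact (mem_filter.mp (heq.ge (mem_filter.mpr hy))).1
    · exact hsup hy.1
    · exact absurd hx.1 (disjoint_left.mp hdisj hxS)
  exact ⟨a, b, hab, (mem_filter.mp ha).2, (mem_filter.mp hb).2,
    fun S hS => ⟨key S hS a ha b hb, key S hS b hb a ha⟩⟩

end Laminar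

section ReducedPolytope

variable {L P : ℕ} {K : Fin P → ℕ} (c : ∀ p : Fin P, Fin L → Fin (K p))
  {T : ℕ} {N : ∀ p : Fin P, Fin (K p) → ℕ}

def cell (p : Fin P) (k : Fin (K p)) : Finset (Fin L) := {ℓ | c p ℓ = k}

@[simp]
theorem mem_cell {p : Fin P} {k : Fin (K p)} {ℓ : Fin L} : ℓ ∈ cell c p k ↔ c p ℓ = k := by
  simp [cell]

def IsNested : Prop :=
  ∀ i j : Fin P, i < j → ∀ k : Fin (K j), ∃ k' : Fin (K i), ∀ ℓ, c j ℓ = k → c i ℓ = k'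

variable (T N) in
def reducedPolytope : Set ((Fin L → ℝ) × (∀ p : Fin P, Fin (K p) → ℝ)) :=
  {zv | (∀ ℓ, 0 ≤ zv.1 ℓ ∧ zv.1 ℓ ≤ 1) ∧ (∑ ℓ, zv.1 ℓ) = (T : ℝ) ∧
    ∀ p k, |(∑ ℓ ∈ cell c p k, zv.1 ℓ) - (N p k : ℝ)| ≤ zv.2 p k}

theorem exists_cell_superset_of_le
    (hnested : IsNested c)
    {p p' : Fin P} (hp : p ≤ p') (k' : Fin (K p')) :
    ∃ k : Fin (K p), cell c p' k' ⊆ cell c p k := by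
  rcases hp.lt_or_eq with hp | rfl
  · obtain ⟨k, hk⟩ := hnested p p' hp k'
    exact ⟨k, fun ℓ hℓ => by simpa using hk ℓ (by simpa using hℓ)⟩
  · exact ⟨k', subset_rfl⟩

theorem cell_laminar_of_nested
    (hnested : IsNested c)
    (p p' : Fin P) (k : Fin (K p)) (k' : Fin (K p')) :
    cell c p k ⊆ cell c p' k' ∨ cell c p' k' ⊆ cell c p k ∨
      Disjoint (cell c p k) (cell c p' k') := by
  have key : ∀ {p p' : Fin P} (k : Fin (K p)) (k' : Fin (K p')), p ≤ p' →
      cell c p' k' ⊆ cell c p k ∨ Disjoint (cell c p k) (cell c p' k') := by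
    intro p p' k k' hp
    obtain ⟨k'', hk''⟩ := exists_cell_superset_of_le c hnested hp k'
    rcases eq_or_ne k'' k with rfl | hk
    · exact .inl hk''
    · refine .inr (disjoint_left.mpr fun ℓ hℓ hℓ' => hk ?_)
      rw [← (mem_cell c).mp (hk'' hℓ'), (mem_cell c).mp hℓ]
  rcases le_total p p' with hp | hp
  · exact (key k k' hp).elim (.inr ∘ .inl) (.inr ∘ .inr)
  · exact (key k' k hp).elim .inl fun h => .inr (.inr h.symm)

theorem snd_eq_abs_of_mem_extremePoints_reducedPolytope
    {zv : (Fin L → ℝ) × (∀ p : Fin P, Fin (K p) → ℝ)}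
    (h : zv ∈ (reducedPolytope c T N).extremePoints ℝ) (p : Fin P) (k : Fin (K p)) :
    zv.2 p k = |(∑ ℓ ∈ cell c p k, zv.1 ℓ) - (N p k : ℝ)| := by
  obtain ⟨z, v⟩ := zv
  obtain ⟨hbox, hsum, hcell⟩ := h.1
  set w : ∀ p : Fin P, Fin (K p) → ℝ := fun p k => |(∑ ℓ ∈ cell c p k, z ℓ) - (N p k : ℝ)|
  have hvw : ∀ p k, w p k ≤ v p k := hcell
  have h₁ : (z, v) + (0, v - w) ∈ reducedPolytope c T N := by
    rw [Prod.mk_add_mk, add_zero]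
    exact ⟨hbox, hsum, fun p k => by simp only [Pi.add_apply, Pi.sub_apply]; linarith [hvw p k]⟩
  have h₂ : (z, v) - (0, v - w) ∈ reducedPolytope c T N := by
    rw [Prod.mk_sub_mk, sub_zero, sub_sub_cancel]
    exact ⟨hbox, hsum, fun p k => le_rfl⟩
  have hd := congrArg Prod.snd (eq_zero_of_add_mem_of_sub_mem_extremePoints h h₁ h₂)
  exact congrFun (congrFun (sub_eq_zero.mp hd) p) k

theorem exists_add_sub_mem_reducedPolytope {z : Fin L → ℝ} {v : ∀ p : Fin P, Fin (K p) → ℝ}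
    (hzv : (z, v) ∈ reducedPolytope c T N) {a b : Fin L} (hab : a ≠ b) {ε : ℝ} (hε : 0 ≤ ε)
    (ha : ε ≤ z a ∧ ε ≤ 1 - z a) (hb : ε ≤ z b ∧ ε ≤ 1 - z b)
    (hsep : ∀ p k, (c p a = k ↔ c p b = k) ∨ ε ≤ |(∑ ℓ ∈ cell c p k, z ℓ) - (N p k : ℝ)|) :
    ∃ d : (Fin L → ℝ) × (∀ p : Fin P, Fin (K p) → ℝ), d.1 a = ε ∧
      (z, v) + d ∈ reducedPolytope c T N ∧ (z, v) - d ∈ reducedPolytope c T N := by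
  obtain ⟨hbox, hsum, hcell⟩ := hzv
  set e : Fin L → ℝ := Pi.single a 1 - Pi.single b 1
  have he_sum : ∀ S : Finset (Fin L),
      ∑ ℓ ∈ S, e ℓ = (if a ∈ S then 1 else 0) - if b ∈ S then 1 else 0 := by
    intro S
    simp [e, sum_sub_distrib, sum_pi_single']
  -- Moving mass `t` between `a` and `b` shifts each cell deviation `s` by some `δ ∈ {0, ±t}`;
  -- `v` follows with `sign s * δ`, which is exact since `|δ| ≤ |s|`.
  set w : ∀ p : Fin P, Fin (K p) → ℝ := fun p k =>
    SignType.sign ((∑ ℓ ∈ cell c p k, z ℓ) - (N p k : ℝ)) * ∑ ℓ ∈ cell c p k, e ℓ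
  have hmem : ∀ t : ℝ, |t| ≤ ε → (z + t • e, v + t • w) ∈ reducedPolytope c T N := by
    intro t ht
    obtain ⟨ht₁, ht₂⟩ := abs_le.mp ht
    refine ⟨fun ℓ => ?_, ?_, fun p k => ?_⟩
    · have := hbox ℓ
      rcases eq_or_ne ℓ a with rfl | hℓa
      · simp only [e, Pi.add_apply, Pi.smul_apply, Pi.sub_apply, Pi.single_eq_same,
          Pi.single_eq_of_ne hab, smul_eq_mul]
        constructor <;> linarith
      rcases eq_or_ne ℓ b with rfl | hℓb
      · simp only [e, Pi.add_apply, Pi.smul_apply, Pi.sub_apply, Pi.single_eq_same,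
          Pi.single_eq_of_ne hℓa, smul_eq_mul]
        constructor <;> linarith
      · simpa [e, hℓa, hℓb] using this
    · simp [sum_add_distrib, ← mul_sum, he_sum, hsum]
    · have hδ : |t * ∑ ℓ ∈ cell c p k, e ℓ| ≤ |(∑ ℓ ∈ cell c p k, z ℓ) - (N p k : ℝ)| := by
        rw [he_sum, abs_mul]
        rcases hsep p k with hiff | hle
        · simp [hiff]
        · refine le_trans ?_ hle
          calc |t| * |(if a ∈ cell c p k then (1 : ℝ) else 0) - if b ∈ cell c p k then 1 else 0|
              ≤ |t| * 1 := by gcongr; split_ifs <;> norm_num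
            _ ≤ ε := by rwa [mul_one]
      have := abs_add_eq_of_abs_le hδ
      simp only [Pi.add_apply, Pi.smul_apply, smul_eq_mul, sum_add_distrib, ← mul_sum, w]
      rw [add_sub_right_comm, this]
      linarith [hcell p k]
  refine ⟨(ε • e, ε • w), by simp [e, hab], hmem ε (abs_of_nonneg hε).le, ?_⟩
  simpa [sub_eq_add_neg] using hmem (-ε) (by rw [abs_neg, abs_of_nonneg hε])

theorem notMem_extremePoints_reducedPolytope {z : Fin L → ℝ}
    {v : ∀ p : Fin P, Fin (K p) → ℝ} (hzv : (z, v) ∈ reducedPolytope c T N) {a b : Fin L}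
    (hab : a ≠ b) (ha : z a ∈ Set.Ioo 0 1) (hb : z b ∈ Set.Ioo 0 1)
    (htight : ∀ p k, ∑ ℓ ∈ cell c p k, z ℓ = N p k → (c p a = k ↔ c p b = k)) :
    (z, v) ∉ (reducedPolytope c T N).extremePoints ℝ := by
  intro hext
  have hsmall : ∀ᶠ ε in 𝓝[>] (0 : ℝ), 0 < ε ∧ (ε ≤ z a ∧ ε ≤ 1 - z a) ∧
      (ε ≤ z b ∧ ε ≤ 1 - z b) ∧
      ∀ p k, (c p a = k ↔ c p b = k) ∨ ε ≤ |(∑ ℓ ∈ cell c p k, z ℓ) - (N p k : ℝ)| := by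
    refine Filter.Eventually.and self_mem_nhdsWithin (nhdsWithin_le_nhds ?_)
    have hsep : ∀ p k, ∀ᶠ ε in 𝓝 (0 : ℝ),
        (c p a = k ↔ c p b = k) ∨ ε ≤ |(∑ ℓ ∈ cell c p k, z ℓ) - (N p k : ℝ)| := by
      intro p k
      by_cases hk : c p a = k ↔ c p b = k
      · exact .of_forall fun _ => .inl hk
      · have := abs_pos.mpr (sub_ne_zero.mpr (mt (htight p k) hk))
        exact (eventually_le_nhds this).mono fun _ => .inr
    filter_upwards [eventually_le_nhds ha.1, eventually_le_nhds (sub_pos.mpr ha.2),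
      eventually_le_nhds hb.1, eventually_le_nhds (sub_pos.mpr hb.2),
      eventually_all.mpr fun p => eventually_all.mpr (hsep p)] with ε h₁ h₂ h₃ h₄ h₅
    exact ⟨⟨h₁, h₂⟩, ⟨h₃, h₄⟩, h₅⟩
  obtain ⟨ε, hε, hεa, hεb, hsep⟩ := hsmall.exists
  obtain ⟨d, hda, h₁, h₂⟩ := exists_add_sub_mem_reducedPolytope c hzv hab hε.le hεa hεb hsep
  rw [eq_zero_of_add_mem_of_sub_mem_extremePoints hext h₁ h₂] at hda
  exact hε.ne hda

theorem fst_eq_zero_or_one_of_mem_extremePoints_reducedPolytope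
    (hnested : IsNested c)
    {zv : (Fin L → ℝ) × (∀ p : Fin P, Fin (K p) → ℝ)}
    (h : zv ∈ (reducedPolytope c T N).extremePoints ℝ) (ℓ : Fin L) :
    zv.1 ℓ = 0 ∨ zv.1 ℓ = 1 := by
  obtain ⟨z, v⟩ := zv
  obtain ⟨hbox, hsum, -⟩ := h.1
  by_contra! hfrac
  let 𝒯 : Set (Finset (Fin L)) :=
    {S | S = univ ∨ ∃ p k, S = cell c p k ∧ ∑ ℓ ∈ S, z ℓ = N p k}
  have hlam : ∀ S ∈ 𝒯, ∀ S' ∈ 𝒯, S ⊆ S' ∨ S' ⊆ S ∨ Disjoint S S' := by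
    rintro S (rfl | ⟨p, k, rfl, -⟩) S' (rfl | ⟨p', k', rfl, -⟩)
    · exact .inl subset_rfl
    · exact .inr (.inl (subset_univ _))
    · exact .inl (subset_univ _)
    · exact cell_laminar_of_nested c hnested p p' k k'
  have hint : ∀ S ∈ 𝒯, ∃ m : ℤ, ∑ ℓ ∈ S, z ℓ = m := by
    rintro S (rfl | ⟨p, k, rfl, hS⟩)
    · exact ⟨T, by simpa using hsum⟩
    · exact ⟨N p k, by simpa using hS⟩
  have hℓ : z ℓ ∈ Set.Ioo 0 1 :=
    ⟨(hbox ℓ).1.lt_of_ne' hfrac.1, (hbox ℓ).2.lt_of_ne hfrac.2⟩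
  obtain ⟨a, b, hab, ha, hb, hmem⟩ := exists_ne_forall_mem_iff_of_laminar 𝒯 hlam hint hbox
    (.inl rfl) ⟨ℓ, mem_filter.mpr ⟨mem_univ ℓ, hℓ⟩⟩
  exact notMem_extremePoints_reducedPolytope c h.1 hab ha hb
    (fun p k hk => by simpa using hmem _ (.inr ⟨p, k, rfl, hk⟩)) h

end ReducedPolytope

theorem prop2_case2_reduced_integral_general
    (T L P : ℕ)
    (K : Fin P → ℕ)
    (c : ∀ p : Fin P, Fin L → Fin (K p))
    (hnested : ∀ i j : Fin P, i < j → ∀ k : Fin (K j),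
      ∃ k' : Fin (K i), ∀ ℓ, c j ℓ = k → c i ℓ = k')
    (N : ∀ p : Fin P, Fin (K p) → ℕ)
    (Q : Set ((Fin L → ℝ) × (∀ p : Fin P, Fin (K p) → ℝ)))
    (hQ : Q = {zv | (∀ ℓ, 0 ≤ zv.1 ℓ ∧ zv.1 ℓ ≤ 1) ∧
      (∑ ℓ, zv.1 ℓ) = (T : ℝ) ∧
      ∀ p k, |(∑ ℓ ∈ Finset.univ.filter (fun ℓ => c p ℓ = k), zv.1 ℓ) - (N p k : ℝ)|
        ≤ zv.2 p k}) :
    ∀ zv ∈ Set.extremePoints ℝ Q,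
      (∀ ℓ, zv.1 ℓ = 0 ∨ zv.1 ℓ = 1) ∧
      (∀ p k, ∃ n : ℤ, zv.2 p k = (n : ℝ)) := by
  change Q = reducedPolytope c T N at hQ
  subst hQ
  intro zv hzv
  have hz := fst_eq_zero_or_one_of_mem_extremePoints_reducedPolytope c hnested hzv
  refine ⟨hz, fun p k => ?_⟩
  obtain ⟨m, hm⟩ := exists_nat_sum_eq_of_forall_eq_zero_or_one (S := cell c p k) fun ℓ _ => hz ℓ
  exact ⟨|(m : ℤ) - N p k|, by
    rw [snd_eq_abs_of_mem_extremePoints_reducedPolytope c hzv, hm]; push_cast; rfl⟩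

/-- Proposition 2, case 2, reduced formulation: with nested covariates, every
extreme point of the polyhedron `Q` is integral. -/
theorem prop2_case2_reduced_integral
    (T L P : ℕ) (hT : 0 < T) (hL : 0 < L)
    (K : Fin P → ℕ) (hK : ∀ p, 0 < K p)
    (c : ∀ p : Fin P, Fin L → Fin (K p))
    (hnested : ∀ i j : Fin P, i < j → ∀ k : Fin (K j),
      ∃ k' : Fin (K i), ∀ ℓ, c j ℓ = k → c i ℓ = k')
    (N : ∀ p : Fin P, Fin (K p) → ℕ)
    (hN : ∀ p, ∑ k, N p k = T)
    (Q : Set ((Fin L → ℝ) × (∀ p : Fin P, Fin (K p) → ℝ)))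
    (hQ : Q = {zv | (∀ ℓ, 0 ≤ zv.1 ℓ ∧ zv.1 ℓ ≤ 1) ∧
      (∑ ℓ, zv.1 ℓ) = (T : ℝ) ∧
      ∀ p k, |(∑ ℓ ∈ Finset.univ.filter (fun ℓ => c p ℓ = k), zv.1 ℓ) - (N p k : ℝ)|
        ≤ zv.2 p k}) :
    ∀ zv ∈ Set.extremePoints ℝ Q,
      (∀ ℓ, zv.1 ℓ = 0 ∨ zv.1 ℓ = 1) ∧
      (∀ p k, ∃ n : ℤ, zv.2 p k = (n : ℝ)) :=
  prop2_case2_reduced_integral_general T L P K c hnested N Q hQ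
end

section
/- Lemma 1 (failure of integrality with three covariates): there exist positive integers T and L, three category maps c_p : Fin L → Fin 3 for p = 1, 2, 3, and target counts N_{p,k} ∈ ℕ with Σ_{k ∈ Fin 3} N_{p,k} = T for each p, such that the polyhedron Q built from this data has an extreme point that is not integral (some coordinate is not an integer). -/
def cmap : Fin 3 → Fin 6 → Fin 3 := ![![0,0,1,1,2,2], ![2,0,0,1,1,2], ![0,1,0,2,1,2]]

lemma cmap_card (p k : Fin 3) :
    (Finset.univ.filter (fun ℓ => cmap p ℓ = k)).card = 2 := by
  fin_cases p <;> fin_cases k <;> decide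

lemma solve6 (z : Fin 6 → ℝ)
    (h : ∀ p k, ∑ ℓ ∈ Finset.univ.filter (fun ℓ => cmap p ℓ = k), z ℓ = 1) :
    ∀ ℓ, z ℓ = 1/2 := by
  have h1 := h 0 0; have h2 := h 0 1; have h3 := h 0 2
  have h4 := h 1 0; have h5 := h 1 1; have h6 := h 2 0
  rw [show Finset.univ.filter (fun ℓ => cmap 0 ℓ = 0) = {0, 1} from by decide] at h1
  rw [show Finset.univ.filter (fun ℓ => cmap 0 ℓ = 1) = {2, 3} from by decide] at h2
  rw [show Finset.univ.filter (fun ℓ => cmap 0 ℓ = 2) = {4, 5} from by decide] at h3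
  rw [show Finset.univ.filter (fun ℓ => cmap 1 ℓ = 0) = {1, 2} from by decide] at h4
  rw [show Finset.univ.filter (fun ℓ => cmap 1 ℓ = 1) = {3, 4} from by decide] at h5
  rw [show Finset.univ.filter (fun ℓ => cmap 2 ℓ = 0) = {0, 2} from by decide] at h6
  simp [Finset.sum_pair] at h1 h2 h3 h4 h5 h6
  intro ℓ; fin_cases ℓ <;> simp <;> linarith

/-- Lemma 1: with three covariates (each with three categories), the LP relaxation `Q`
of the reduced matching formulation can fail to be integral: there is an instance whose
polyhedron `Q` has a non-integral extreme point. -/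
theorem lemma1_nonintegral_extreme_point_exists :
    ∃ (T L : ℕ), 0 < T ∧ 0 < L ∧
      ∃ (c : Fin 3 → Fin L → Fin 3) (N : Fin 3 → Fin 3 → ℕ),
        (∀ p, ∑ k, N p k = T) ∧
        ∃ zv : (Fin L → ℝ) × (Fin 3 → Fin 3 → ℝ),
          zv ∈ Set.extremePoints ℝ
            {zv' : (Fin L → ℝ) × (Fin 3 → Fin 3 → ℝ) |
              (∀ ℓ, 0 ≤ zv'.1 ℓ ∧ zv'.1 ℓ ≤ 1) ∧
              (∑ ℓ, zv'.1 ℓ) = (T : ℝ) ∧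
              ∀ p k, |(∑ ℓ ∈ Finset.univ.filter (fun ℓ => c p ℓ = k), zv'.1 ℓ) - (N p k : ℝ)|
                ≤ zv'.2 p k} ∧
          ¬((∀ ℓ, ∃ n : ℤ, zv.1 ℓ = (n : ℝ)) ∧ (∀ p k, ∃ n : ℤ, zv.2 p k = (n : ℝ))) := by
  refine ⟨3, 6, by norm_num, by norm_num, cmap, fun _ _ => 1, fun p => by simp, ?_⟩
  refine ⟨((fun _ => 1/2), (fun _ _ => 0)), ?_, ?_⟩
  · rw [mem_extremePoints]
    constructor
    · refine ⟨fun ℓ => by norm_num, ?_, ?_⟩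
      · simp [Fin.sum_univ_six]; norm_num
      · intro p k
        rw [Finset.sum_const, cmap_card]
        norm_num
    · rintro x1 hx1 x2 hx2 ⟨a, b, ha, hb, hab, hx⟩
      obtain ⟨hbox1, hsum1, habs1⟩ := hx1
      obtain ⟨hbox2, hsum2, habs2⟩ := hx2
      -- second components vanish
      have hv : ∀ p k, x1.2 p k = 0 ∧ x2.2 p k = 0 := by
        intro p k
        have hmix : a * x1.2 p k + b * x2.2 p k = 0 := by
          have := congrArg (fun w => w.2 p k) hx
          simpa using this
        have h1 : 0 ≤ x1.2 p k := le_trans (abs_nonneg _) (habs1 p k)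
        have h2 : 0 ≤ x2.2 p k := le_trans (abs_nonneg _) (habs2 p k)
        have ha1 : a * x1.2 p k = 0 := by
          nlinarith [mul_nonneg ha.le h1, mul_nonneg hb.le h2]
        have hb1 : b * x2.2 p k = 0 := by linarith
        exact ⟨(mul_eq_zero.mp ha1).resolve_left (ne_of_gt ha),
               (mul_eq_zero.mp hb1).resolve_left (ne_of_gt hb)⟩
      -- hence the group sums are exactly 1 for both
      have hs1 : ∀ p k, ∑ ℓ ∈ Finset.univ.filter (fun ℓ => cmap p ℓ = k), x1.1 ℓ = 1 := by
        intro p k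
        have := habs1 p k
        rw [(hv p k).1] at this
        have := abs_nonpos_iff.mp this
        push_cast at this
        linarith [sub_eq_zero.mp this]
      have hs2 : ∀ p k, ∑ ℓ ∈ Finset.univ.filter (fun ℓ => cmap p ℓ = k), x2.1 ℓ = 1 := by
        intro p k
        have := habs2 p k
        rw [(hv p k).2] at this
        have := abs_nonpos_iff.mp this
        push_cast at this
        linarith [sub_eq_zero.mp this]
      have hz1 := solve6 x1.1 hs1
      have hz2 := solve6 x2.1 hs2
      constructor <;>
        · refine Prod.ext (funext fun ℓ => ?_) (funext fun p => funext fun k => ?_)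
          · first | exact hz1 ℓ | exact hz2 ℓ
          · first | exact (hv p k).1 | exact (hv p k).2
  · rintro ⟨h1, -⟩
    obtain ⟨n, hn⟩ := h1 0
    have h2 : (2 * n : ℝ) = 1 := by rw [← hn]; norm_num
    have : (2 * n : ℤ) = 1 := by exact_mod_cast h2
    omega
end

section
/- Equality of the optimal values of the full and reduced integer matching formulations: assume T ≤ L. Then the minimum of Σ_{p ∈ Fin P} Σ_{k ∈ Fin K_p} |Σ_{ℓ ∈ L_{p,k}} Σ_{t ∈ Fin T} m_{t,ℓ} − N_{p,k}| over all m : Fin T → Fin L → {0, 1} with Σ_{ℓ ∈ Fin L} m_{t,ℓ} = 1 for every t and Σ_{t ∈ Fin T} m_{t,ℓ} ≤ 1 for every ℓ, equals the minimum of Σ_{p ∈ Fin P} Σ_{k ∈ Fin K_p} |Σ_{ℓ ∈ L_{p,k}} z_ℓ − N_{p,k}| over all z : Fin L → {0, 1} with Σ_{ℓ ∈ Fin L} z_ℓ = T. -/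
/-- Equality of the optimal values of the full and reduced integer matching
formulations: when `T ≤ L`, the minimum total imbalance over binary assignment
matrices `m` (rows summing to 1, column sums at most 1) equals the minimum total
imbalance over binary selection vectors `z` summing to `T`. -/
theorem full_and_reduced_integer_optima_equal
    (T L P : ℕ) (hT : 0 < T) (hL : 0 < L) (hTL : T ≤ L)
    (K : Fin P → ℕ) (hK : ∀ p, 0 < K p)
    (c : ∀ p : Fin P, Fin L → Fin (K p))
    (N : ∀ p : Fin P, Fin (K p) → ℕ)
    (hN : ∀ p, ∑ k, N p k = T) :
    sInf {val : ℝ | ∃ m : Fin T → Fin L → ℕ,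
        (∀ t ℓ, m t ℓ = 0 ∨ m t ℓ = 1) ∧
        (∀ t, (∑ ℓ, m t ℓ) = 1) ∧
        (∀ ℓ, (∑ t, m t ℓ) ≤ 1) ∧
        val = ∑ p, ∑ k,
          |(∑ ℓ ∈ Finset.univ.filter (fun ℓ => c p ℓ = k), ∑ t, (m t ℓ : ℝ)) - (N p k : ℝ)|}
    = sInf {val : ℝ | ∃ z : Fin L → ℕ,
        (∀ ℓ, z ℓ = 0 ∨ z ℓ = 1) ∧
        (∑ ℓ, z ℓ) = T ∧
        val = ∑ p, ∑ k,
          |(∑ ℓ ∈ Finset.univ.filter (fun ℓ => c p ℓ = k), (z ℓ : ℝ)) - (N p k : ℝ)|} := by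
  congr 1
  ext v
  simp only [Set.mem_setOf_eq]
  constructor
  · rintro ⟨m, hm01, hrow, hcol, hv⟩
    refine ⟨fun ℓ => ∑ t, m t ℓ, fun ℓ => Nat.le_one_iff_eq_zero_or_eq_one.mp (hcol ℓ), ?_, ?_⟩
    · rw [Finset.sum_comm]
      simp [hrow]
    · rw [hv]
      push_cast
      rfl
  · rintro ⟨z, hz01, hzsum, hv⟩
    set S := Finset.univ.filter (fun ℓ => z ℓ = 1) with hS
    have hcard : S.card = T := by
      rw [← hzsum, Finset.card_filter]
      refine Finset.sum_congr rfl fun ℓ _ => ?_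
      rcases hz01 ℓ with h | h <;> simp [h]
    let e := S.orderIsoOfFin hcard
    have key : ∀ ℓ, (∑ t, if ℓ = (e t : Fin L) then 1 else 0) = z ℓ := by
      intro ℓ
      have h1 : (∑ t, if ℓ = (e t : Fin L) then 1 else 0)
          = ∑ s : S, if ℓ = (s : Fin L) then 1 else 0 :=
        Equiv.sum_comp e.toEquiv (fun s : S => if ℓ = (s : Fin L) then 1 else 0)
      rw [h1, Finset.sum_coe_sort S (fun x => if ℓ = x then 1 else 0),
        Finset.sum_ite_eq S ℓ (fun _ => 1)]
      rcases hz01 ℓ with h | h <;> simp [hS, h]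
    refine ⟨fun t ℓ => if ℓ = (e t : Fin L) then 1 else 0, ?_, ?_, ?_, ?_⟩
    · intro t ℓ
      by_cases h : ℓ = (e t : Fin L) <;> simp [h]
    · intro t
      simp
    · intro ℓ
      rw [key]
      rcases hz01 ℓ with h | h <;> simp [h]
    · rw [hv]
      refine Finset.sum_congr rfl fun p _ => Finset.sum_congr rfl fun k _ =>
        congrArg _ (congrArg (· - _) (Finset.sum_congr rfl fun ℓ _ => ?_))
      push_cast [← key ℓ]
      simp
end

section
/- LP relaxation solves the integer program with at most two covariates: assume P ≤ 2 and T ≤ L. Then the infimum of Σ_{p ∈ Fin P} Σ_{k ∈ Fin K_p} v_{p,k} over all (z, v) ∈ Q equals the minimum of Σ_{p ∈ Fin P} Σ_{k ∈ Fin K_p} |Σ_{ℓ ∈ L_{p,k}} z_ℓ − N_{p,k}| over all z : Fin L → {0, 1} with Σ_{ℓ ∈ Fin L} z_ℓ = T. -/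
open Finset


noncomputable def sumOn {E : Type*} [Fintype E] (s : Finset E) : (E → ℝ) →ₗ[ℝ] ℝ where
  toFun d := ∑ e ∈ s, d e
  map_add' := by intros; simp [Finset.sum_add_distrib]
  map_smul' := by intros; simp [Finset.mul_sum]

lemma sumOn_apply {E : Type*} [Fintype E] (s : Finset E) (d : E → ℝ) :
    sumOn s d = ∑ e ∈ s, d e := rfl

lemma exists_ne_zero_of_card_lt {E ι : Type*} [Fintype E] [Fintype ι]
    (φ : ι → (E → ℝ) →ₗ[ℝ] ℝ) (h : Fintype.card ι < Fintype.card E) :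
    ∃ d : E → ℝ, d ≠ 0 ∧ ∀ i, φ i d = 0 := by
  have hni : ¬ Function.Injective (LinearMap.pi φ) := by
    intro hinj
    have := LinearMap.finrank_le_finrank_of_injective hinj
    simp [Module.finrank_fintype_fun_eq_card] at this
    omega
  rw [← LinearMap.ker_eq_bot] at hni
  obtain ⟨d, hd, hd0⟩ := Submodule.ne_bot_iff _ |>.mp hni
  exact ⟨d, hd0, fun i => congrFun (LinearMap.mem_ker.mp hd) i⟩

lemma exists_int_sum {α : Type*} {s : Finset α} {f : α → ℝ}
    (h : ∀ x ∈ s, ∃ n : ℤ, f x = n) : ∃ n : ℤ, ∑ x ∈ s, f x = n := by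
  classical
  induction s using Finset.induction with
  | empty => exact ⟨0, by simp⟩
  | @insert y s hy ih =>
    obtain ⟨n, hn⟩ := h _ (mem_insert_self _ _)
    obtain ⟨m, hm⟩ := ih (fun x hx' => h x (mem_insert_of_mem hx'))
    exact ⟨n + m, by rw [sum_insert hy, hn, hm]; push_cast; ring⟩

lemma abstract_ker {γ A B : Type*} [Fintype γ] [DecidableEq γ] [Fintype A] [DecidableEq A]
    [Fintype B] [DecidableEq B]
    (E : Finset γ) (hE : E.Nonempty) (a : γ → A) (b : γ → B) (z : γ → ℝ)
    (hz : ∀ e ∈ E, ∀ n : ℤ, z e ≠ (n : ℝ))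
    (hsum : ∃ n : ℤ, ∑ e ∈ E, z e = (n : ℝ)) :
    ∃ d : γ → ℝ, d ≠ 0 ∧ (∀ ℓ, ℓ ∉ E → d ℓ = 0) ∧ (∑ e ∈ E, d e = 0) ∧
      (∀ i : A, (∃ n : ℤ, ∑ e ∈ E.filter (fun e => a e = i), z e = (n:ℝ)) →
        ∑ e ∈ E.filter (fun e => a e = i), d e = 0) ∧
      (∀ j : B, (∃ n : ℤ, ∑ e ∈ E.filter (fun e => b e = j), z e = (n:ℝ)) →
        ∑ e ∈ E.filter (fun e => b e = j), d e = 0) := by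
  classical
  set SA : A → ℝ := fun i => ∑ e ∈ E.filter (fun e => a e = i), z e with hSAdef
  set SB : B → ℝ := fun j => ∑ e ∈ E.filter (fun e => b e = j), z e with hSBdef
  set PA : Finset A := univ.filter
    (fun i => (∃ n : ℤ, SA i = (n:ℝ)) ∧ (E.filter (fun e => a e = i)).Nonempty) with hPAdef
  set PB : Finset B := univ.filter
    (fun j => (∃ n : ℤ, SB j = (n:ℝ)) ∧ (E.filter (fun e => b e = j)).Nonempty) with hPBdef
  set FA : Finset A := univ.filter (fun i => ¬ ∃ n : ℤ, SA i = (n:ℝ)) with hFAdef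
  set FB : Finset B := univ.filter (fun j => ¬ ∃ n : ℤ, SB j = (n:ℝ)) with hFBdef
  -- degree bounds
  have hdegA : ∀ i ∈ PA, 2 ≤ (E.filter (fun e => a e = i)).card := by
    intro i hi
    rw [hPAdef, mem_filter] at hi
    obtain ⟨-, ⟨n, hn⟩, hne⟩ := hi
    rcases Nat.lt_or_ge (E.filter (fun e => a e = i)).card 2 with h | h
    · interval_cases h' : (E.filter (fun e => a e = i)).card
      · exact absurd (card_eq_zero.mp h') (ne_empty_of_mem hne.choose_spec)
      · obtain ⟨e, he⟩ := card_eq_one.mp h'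
        have heE : e ∈ E := (mem_filter.mp (he ▸ mem_singleton_self e)).1
        have : SA i = z e := by rw [hSAdef]; simp only; rw [he, sum_singleton]
        exact absurd (this ▸ hn) (hz e heE n)
      
    · exact h
  have hdegB : ∀ j ∈ PB, 2 ≤ (E.filter (fun e => b e = j)).card := by
    intro j hj
    rw [hPBdef, mem_filter] at hj
    obtain ⟨-, ⟨n, hn⟩, hne⟩ := hj
    rcases Nat.lt_or_ge (E.filter (fun e => b e = j)).card 2 with h | h
    · interval_cases h' : (E.filter (fun e => b e = j)).card
      · exact absurd (card_eq_zero.mp h') (ne_empty_of_mem hne.choose_spec)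
      · obtain ⟨e, he⟩ := card_eq_one.mp h'
        have heE : e ∈ E := (mem_filter.mp (he ▸ mem_singleton_self e)).1
        have : SB j = z e := by rw [hSBdef]; simp only; rw [he, sum_singleton]
        exact absurd (this ▸ hn) (hz e heE n)
    · exact h
  have hdegFA : ∀ i ∈ FA, 1 ≤ (E.filter (fun e => a e = i)).card := by
    intro i hi
    rw [hFAdef, mem_filter] at hi
    rw [Nat.one_le_iff_ne_zero, Ne, card_eq_zero]
    intro h0
    exact hi.2 ⟨0, by rw [hSAdef]; simp only; rw [h0]; simp⟩
  have hdegFB : ∀ j ∈ FB, 1 ≤ (E.filter (fun e => b e = j)).card := by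
    intro j hj
    rw [hFBdef, mem_filter] at hj
    rw [Nat.one_le_iff_ne_zero, Ne, card_eq_zero]
    intro h0
    exact hj.2 ⟨0, by rw [hSBdef]; simp only; rw [h0]; simp⟩
  have hdisjA : Disjoint PA FA := by
    rw [disjoint_left]
    intro i hi hi'
    rw [hPAdef, mem_filter] at hi
    rw [hFAdef, mem_filter] at hi'
    exact hi'.2 hi.2.1
  have hdisjB : Disjoint PB FB := by
    rw [disjoint_left]
    intro j hj hj'
    rw [hPBdef, mem_filter] at hj
    rw [hFBdef, mem_filter] at hj'
    exact hj'.2 hj.2.1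
  have hcountA : 2 * PA.card + FA.card ≤ E.card := by
    have h1 : E.card = ∑ i ∈ (univ : Finset A), (E.filter (fun e => a e = i)).card :=
      card_eq_sum_card_fiberwise (fun x _ => mem_univ (a x))
    calc 2 * PA.card + FA.card
        = ∑ _i ∈ PA, 2 + ∑ _i ∈ FA, 1 := by simp [mul_comm]
      _ ≤ ∑ i ∈ PA, (E.filter (fun e => a e = i)).card
          + ∑ i ∈ FA, (E.filter (fun e => a e = i)).card :=
            add_le_add (sum_le_sum hdegA) (sum_le_sum hdegFA)
      _ = ∑ i ∈ PA ∪ FA, (E.filter (fun e => a e = i)).card := (sum_union hdisjA).symm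
      _ ≤ ∑ i ∈ (univ : Finset A), (E.filter (fun e => a e = i)).card :=
            sum_le_sum_of_subset (subset_univ _)
      _ = E.card := h1.symm
  have hcountB : 2 * PB.card + FB.card ≤ E.card := by
    have h1 : E.card = ∑ j ∈ (univ : Finset B), (E.filter (fun e => b e = j)).card :=
      card_eq_sum_card_fiberwise (fun x _ => mem_univ (b x))
    calc 2 * PB.card + FB.card
        = ∑ _j ∈ PB, 2 + ∑ _j ∈ FB, 1 := by simp [mul_comm]
      _ ≤ ∑ j ∈ PB, (E.filter (fun e => b e = j)).card
          + ∑ j ∈ FB, (E.filter (fun e => b e = j)).card :=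
            add_le_add (sum_le_sum hdegB) (sum_le_sum hdegFB)
      _ = ∑ j ∈ PB ∪ FB, (E.filter (fun e => b e = j)).card := (sum_union hdisjB).symm
      _ ≤ ∑ j ∈ (univ : Finset B), (E.filter (fun e => b e = j)).card :=
            sum_le_sum_of_subset (subset_univ _)
      _ = E.card := h1.symm
  have hFA1 : FA.card ≠ 1 := by
    intro h1
    obtain ⟨i0, hi0⟩ := card_eq_one.mp h1
    have hmem : i0 ∈ FA := hi0 ▸ mem_singleton_self i0
    have htot : ∑ i ∈ (univ : Finset A), SA i = ∑ e ∈ E, z e :=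
      sum_fiberwise_of_maps_to (fun x _ => mem_univ (a x)) z
    have hcompl : ∃ n : ℤ, ∑ i ∈ FAᶜ, SA i = (n:ℝ) := by
      apply exists_int_sum
      intro i hi
      rw [mem_compl, hFAdef, mem_filter] at hi
      push_neg at hi
      exact hi (mem_univ i)
    obtain ⟨n, hn⟩ := hsum
    obtain ⟨m, hm⟩ := hcompl
    have hsplit : ∑ i ∈ FA, SA i + ∑ i ∈ FAᶜ, SA i = ∑ i ∈ (univ : Finset A), SA i :=
      sum_add_sum_compl FA SA
    have : SA i0 = ((n - m : ℤ) : ℝ) := by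
      rw [hi0, sum_singleton] at hsplit
      rw [hi0] at hm
      push_cast
      rw [htot, hn] at hsplit
      linarith
    rw [hFAdef, mem_filter] at hmem
    exact hmem.2 ⟨n - m, this⟩
  have hFB1 : FB.card ≠ 1 := by
    intro h1
    obtain ⟨j0, hj0⟩ := card_eq_one.mp h1
    have hmem : j0 ∈ FB := hj0 ▸ mem_singleton_self j0
    have htot : ∑ j ∈ (univ : Finset B), SB j = ∑ e ∈ E, z e :=
      sum_fiberwise_of_maps_to (fun x _ => mem_univ (b x)) z
    have hcompl : ∃ n : ℤ, ∑ j ∈ FBᶜ, SB j = (n:ℝ) := by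
      apply exists_int_sum
      intro j hj
      rw [mem_compl, hFBdef, mem_filter] at hj
      push_neg at hj
      exact hj (mem_univ j)
    obtain ⟨n, hn⟩ := hsum
    obtain ⟨m, hm⟩ := hcompl
    have hsplit : ∑ j ∈ FB, SB j + ∑ j ∈ FBᶜ, SB j = ∑ j ∈ (univ : Finset B), SB j :=
      sum_add_sum_compl FB SB
    have : SB j0 = ((n - m : ℤ) : ℝ) := by
      rw [hj0, sum_singleton] at hsplit
      rw [hj0] at hm
      push_cast
      rw [htot, hn] at hsplit
      linarith
    rw [hFBdef, mem_filter] at hmem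
    exact hmem.2 ⟨n - m, this⟩
  -- generic kernel construction
  have key : ∀ (sA : Finset A) (sB : Finset B) (m : ℕ),
      sA.card + sB.card + m < E.card →
      ∃ d : γ → ℝ, d ≠ 0 ∧ (∀ ℓ, ℓ ∉ E → d ℓ = 0) ∧
        (∀ i ∈ sA, ∑ e ∈ E.filter (fun e => a e = i), d e = 0) ∧
        (∀ j ∈ sB, ∑ e ∈ E.filter (fun e => b e = j), d e = 0) ∧
        (m ≠ 0 → ∑ e ∈ E, d e = 0) := by
    intro sA sB m hcard
    have hcards : Fintype.card ((↥(Eᶜ) ⊕ ↥sA) ⊕ ↥sB ⊕ Fin m) < Fintype.card γ := by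
      have h1 : Fintype.card ((↥(Eᶜ) ⊕ ↥sA) ⊕ ↥sB ⊕ Fin m)
          = (Fintype.card γ - E.card) + sA.card + (sB.card + m) := by
        simp [Fintype.card_sum, Fintype.card_coe, card_compl, add_assoc]
      rw [h1]
      have hEle : E.card ≤ Fintype.card γ := card_le_univ E
      have hEpos : 0 < E.card := card_pos.mpr hE
      omega
    obtain ⟨d, hd0, hker⟩ := exists_ne_zero_of_card_lt
      (Sum.elim
        (Sum.elim (fun (e : ↥(Eᶜ)) => LinearMap.proj (R := ℝ) (φ := fun _ : γ => ℝ) e.1)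
          (fun (i : ↥sA) => sumOn (E.filter (fun e => a e = i.1))))
        (Sum.elim (fun (j : ↥sB) => sumOn (E.filter (fun e => b e = j.1)))
          (fun (_ : Fin m) => sumOn E))) hcards
    refine ⟨d, hd0, ?_, ?_, ?_, ?_⟩
    · intro ℓ hℓ
      exact hker (Sum.inl (Sum.inl ⟨ℓ, mem_compl.mpr hℓ⟩))
    · intro i hi
      exact hker (Sum.inl (Sum.inr ⟨i, hi⟩))
    · intro j hj
      exact hker (Sum.inr (Sum.inl ⟨j, hj⟩))
    · intro hm
      exact hker (Sum.inr (Sum.inr ⟨0, Nat.pos_of_ne_zero hm⟩))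
  -- helpers for assembling conclusions
  have fiberAd : ∀ d : γ → ℝ,
      ∑ i ∈ (univ : Finset A), ∑ e ∈ E.filter (fun e => a e = i), d e = ∑ e ∈ E, d e :=
    fun d => sum_fiberwise_of_maps_to (fun x _ => mem_univ (a x)) d
  have fiberBd : ∀ d : γ → ℝ,
      ∑ j ∈ (univ : Finset B), ∑ e ∈ E.filter (fun e => b e = j), d e = ∑ e ∈ E, d e :=
    fun d => sum_fiberwise_of_maps_to (fun x _ => mem_univ (b x)) d
  have mkA : ∀ d : γ → ℝ, (∀ i ∈ PA, ∑ e ∈ E.filter (fun e => a e = i), d e = 0) →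
      ∀ i : A, (∃ n : ℤ, ∑ e ∈ E.filter (fun e => a e = i), z e = (n:ℝ)) →
      ∑ e ∈ E.filter (fun e => a e = i), d e = 0 := by
    intro d h i hpin
    by_cases hne : (E.filter (fun e => a e = i)).Nonempty
    · exact h i (by rw [hPAdef, mem_filter]; exact ⟨mem_univ _, hpin, hne⟩)
    · rw [not_nonempty_iff_eq_empty] at hne
      rw [hne, sum_empty]
  have mkB : ∀ d : γ → ℝ, (∀ j ∈ PB, ∑ e ∈ E.filter (fun e => b e = j), d e = 0) →
      ∀ j : B, (∃ n : ℤ, ∑ e ∈ E.filter (fun e => b e = j), z e = (n:ℝ)) →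
      ∑ e ∈ E.filter (fun e => b e = j), d e = 0 := by
    intro d h j hpin
    by_cases hne : (E.filter (fun e => b e = j)).Nonempty
    · exact h j (by rw [hPBdef, mem_filter]; exact ⟨mem_univ _, hpin, hne⟩)
    · rw [not_nonempty_iff_eq_empty] at hne
      rw [hne, sum_empty]
  have allA : FA = ∅ → ∀ i : A, ∃ n : ℤ, SA i = (n:ℝ) := by
    intro h0 i
    by_contra hi
    have : i ∈ FA := by rw [hFAdef, mem_filter]; exact ⟨mem_univ _, hi⟩
    simp [h0] at this
  have allB : FB = ∅ → ∀ j : B, ∃ n : ℤ, SB j = (n:ℝ) := by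
    intro h0 j
    by_contra hj
    have : j ∈ FB := by rw [hFBdef, mem_filter]; exact ⟨mem_univ _, hj⟩
    simp [h0] at this
  by_cases hFA0 : FA = ∅
  · by_cases hFB0 : FB = ∅
    · -- everything pinned: drop one side-B node
      obtain ⟨e0, he0⟩ := hE
      have hi0 : a e0 ∈ PA := by
        rw [hPAdef, mem_filter]
        exact ⟨mem_univ _, allA hFA0 _, ⟨e0, mem_filter.mpr ⟨he0, rfl⟩⟩⟩
      have hj0 : b e0 ∈ PB := by
        rw [hPBdef, mem_filter]
        exact ⟨mem_univ _, allB hFB0 _, ⟨e0, mem_filter.mpr ⟨he0, rfl⟩⟩⟩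
      obtain ⟨d, hd0, hsupp, hA, hB, -⟩ := key PA (PB.erase (b e0)) 0 (by
        rw [card_erase_of_mem hj0]
        rw [hFA0] at hcountA; rw [hFB0] at hcountB
        simp only [card_empty, add_zero] at hcountA hcountB
        have h1 : 1 ≤ PA.card := card_pos.mpr ⟨_, hi0⟩
        have h2 : 1 ≤ PB.card := card_pos.mpr ⟨_, hj0⟩
        omega)
      have clauseA := mkA d hA
      have sumE : ∑ e ∈ E, d e = 0 := by
        rw [← fiberAd d]
        exact sum_eq_zero (fun i _ => clauseA i (allA hFA0 i))
      refine ⟨d, hd0, hsupp, sumE, clauseA, ?_⟩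
      intro j _
      by_cases hne : (E.filter (fun e => b e = j)).Nonempty
      · by_cases hj : j = b e0
        · subst hj
          have htot : ∑ j' ∈ (univ : Finset B).erase (b e0),
              (∑ e ∈ E.filter (fun e => b e = j'), d e)
              + ∑ e ∈ E.filter (fun e => b e = b e0), d e = 0 := by
            rw [sum_erase_add _ _ (mem_univ (b e0)), fiberBd d]
            exact sumE
          have hrest : ∑ j' ∈ (univ : Finset B).erase (b e0),
              (∑ e ∈ E.filter (fun e => b e = j'), d e) = 0 := by
            apply sum_eq_zero
            intro j' hj'
            by_cases hne' : (E.filter (fun e => b e = j')).Nonempty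
            · refine hB j' (mem_erase.mpr ⟨(mem_erase.mp hj').1, ?_⟩)
              rw [hPBdef, mem_filter]
              exact ⟨mem_univ _, allB hFB0 j', hne'⟩
            · rw [not_nonempty_iff_eq_empty] at hne'
              rw [hne', sum_empty]
          linarith
        · refine hB j (mem_erase.mpr ⟨hj, ?_⟩)
          rw [hPBdef, mem_filter]
          exact ⟨mem_univ _, allB hFB0 j, hne⟩
      · rw [not_nonempty_iff_eq_empty] at hne
        rw [hne, sum_empty]
    · -- FA = ∅, FB.card ≥ 2
      have hFB2 : 2 ≤ FB.card := by
        have h0 : FB.card ≠ 0 := fun h => hFB0 (card_eq_zero.mp h)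
        omega
      obtain ⟨d, hd0, hsupp, hA, hB, -⟩ := key PA PB 0 (by
        rw [hFA0] at hcountA
        simp only [card_empty, add_zero] at hcountA
        omega)
      have clauseA := mkA d hA
      have sumE : ∑ e ∈ E, d e = 0 := by
        rw [← fiberAd d]
        exact sum_eq_zero (fun i _ => clauseA i (allA hFA0 i))
      exact ⟨d, hd0, hsupp, sumE, clauseA, mkB d hB⟩
  · have hFA2 : 2 ≤ FA.card := by
      have h0 : FA.card ≠ 0 := fun h => hFA0 (card_eq_zero.mp h)
      omega
    by_cases hFB0 : FB = ∅
    · -- FB = ∅, FA.card ≥ 2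
      obtain ⟨d, hd0, hsupp, hA, hB, -⟩ := key PA PB 0 (by
        rw [hFB0] at hcountB
        simp only [card_empty, add_zero] at hcountB
        omega)
      have clauseB := mkB d hB
      have sumE : ∑ e ∈ E, d e = 0 := by
        rw [← fiberBd d]
        exact sum_eq_zero (fun j _ => clauseB j (allB hFB0 j))
      exact ⟨d, hd0, hsupp, sumE, mkA d hA, clauseB⟩
    · -- FA.card ≥ 2, FB.card ≥ 2
      have hFB2 : 2 ≤ FB.card := by
        have h0 : FB.card ≠ 0 := fun h => hFB0 (card_eq_zero.mp h)
        omega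
      obtain ⟨d, hd0, hsupp, hA, hB, hsum0⟩ := key PA PB 1 (by omega)
      exact ⟨d, hd0, hsupp, hsum0 one_ne_zero, mkA d hA, mkB d hB⟩

lemma exists_int_sum' {α : Type*} {s : Finset α} {f : α → ℝ}
    (h : ∀ x ∈ s, ∃ n : ℤ, f x = n) : ∃ n : ℤ, ∑ x ∈ s, f x = n := by
  classical
  induction s using Finset.induction with
  | empty => exact ⟨0, by simp⟩
  | @insert y s hy ih =>
    obtain ⟨n, hn⟩ := h _ (mem_insert_self _ _)
    obtain ⟨m, hm⟩ := ih (fun x hx' => h x (mem_insert_of_mem hx'))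
    exact ⟨n + m, by rw [sum_insert hy, hn, hm]; push_cast; ring⟩

noncomputable def Sfun {L P : ℕ} {K : Fin P → ℕ} (c : ∀ p : Fin P, Fin L → Fin (K p))
    (z : Fin L → ℝ) (p : Fin P) (k : Fin (K p)) : ℝ :=
  ∑ ℓ ∈ univ.filter (fun ℓ => c p ℓ = k), z ℓ

noncomputable def fObj {L P : ℕ} {K : Fin P → ℕ} (c : ∀ p : Fin P, Fin L → Fin (K p))
    (N : ∀ p, Fin (K p) → ℕ) (z : Fin L → ℝ) : ℝ :=
  ∑ p, ∑ k, |Sfun c z p k - (N p k : ℝ)|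

lemma measure_lt1 {a b u v R : ℕ} (h1 : a < b) (h2 : u ≤ R) :
    a * (R+1) + u < b * (R+1) + v := by nlinarith

lemma measure_lt2 {a b u v R : ℕ} (h1 : a ≤ b) (h2 : u < v) :
    a * (R+1) + u < b * (R+1) + v := by nlinarith

lemma round_lemma (T L P : ℕ) (hP : P ≤ 2) (K : Fin P → ℕ)
    (c : ∀ p : Fin P, Fin L → Fin (K p)) (N : ∀ p, Fin (K p) → ℕ)
    (z : Fin L → ℝ) (hz01 : ∀ ℓ, 0 ≤ z ℓ ∧ z ℓ ≤ 1) (hzT : ∑ ℓ, z ℓ = (T:ℝ)) :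
    ∃ w : Fin L → ℕ, (∀ ℓ, w ℓ = 0 ∨ w ℓ = 1) ∧ (∑ ℓ, w ℓ = T) ∧
      fObj c N (fun ℓ => (w ℓ : ℝ)) ≤ fObj c N z := by
  classical
  set R : ℕ := ∑ p, K p with hR
  set μ : (Fin L → ℝ) → ℕ := fun z =>
    (univ.filter (fun ℓ => z ℓ ≠ 0 ∧ z ℓ ≠ 1)).card * (R + 1)
      + ∑ p, (univ.filter (fun k => Sfun c z p k ≠ (N p k : ℝ))).card with hμ
  suffices h : ∀ n (z : Fin L → ℝ), (∀ ℓ, 0 ≤ z ℓ ∧ z ℓ ≤ 1) → (∑ ℓ, z ℓ = (T:ℝ)) →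
      μ z ≤ n → ∃ w : Fin L → ℕ, (∀ ℓ, w ℓ = 0 ∨ w ℓ = 1) ∧ (∑ ℓ, w ℓ = T) ∧
      fObj c N (fun ℓ => (w ℓ : ℝ)) ≤ fObj c N z by
    exact h (μ z) z hz01 hzT le_rfl
  intro n
  induction n using Nat.strong_induction_on with
  | _ n ih =>
  intro z hz01 hzT hμn
  by_cases hF : univ.filter (fun ℓ => z ℓ ≠ 0 ∧ z ℓ ≠ 1) = ∅
  · -- z is already integral
    have hzi : ∀ ℓ, z ℓ = 0 ∨ z ℓ = 1 := by
      intro ℓ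
      by_contra hcon
      push_neg at hcon
      exact (eq_empty_iff_forall_notMem.mp hF ℓ) (mem_filter.mpr ⟨mem_univ _, hcon⟩)
    refine ⟨fun ℓ => if z ℓ = 1 then 1 else 0, fun ℓ => by by_cases h : z ℓ = 1 <;> simp [h], ?_, ?_⟩
    · have hval : ∀ ℓ, (((if z ℓ = 1 then (1:ℕ) else 0) : ℕ) : ℝ) = z ℓ := by
        intro ℓ
        rcases hzi ℓ with h | h <;> simp [h]
      have : ((∑ ℓ, if z ℓ = 1 then (1:ℕ) else 0 : ℕ) : ℝ) = (T : ℝ) := by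
        push_cast
        rw [← hzT]
        exact Finset.sum_congr rfl (fun ℓ _ => by rcases hzi ℓ with h | h <;> simp [h])
      exact_mod_cast this
    · apply le_of_eq
      unfold fObj Sfun
      congr 1
      ext p
      congr 1
      ext k
      congr 2
      apply Finset.sum_congr rfl
      intro ℓ _
      rcases hzi ℓ with h | h <;> simp [h]
  · -- fractional case
    set F : Finset (Fin L) := univ.filter (fun ℓ => z ℓ ≠ 0 ∧ z ℓ ≠ 1) with hFdef
    have hFne : F.Nonempty := nonempty_iff_ne_empty.mpr hF
    have hFrac : ∀ ℓ ∈ F, 0 < z ℓ ∧ z ℓ < 1 := by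
      intro ℓ hℓ
      rw [hFdef, mem_filter] at hℓ
      exact ⟨lt_of_le_of_ne (hz01 ℓ).1 (Ne.symm hℓ.2.1), lt_of_le_of_ne (hz01 ℓ).2 hℓ.2.2⟩
    have hint : ∀ ℓ ∈ F, ∀ n : ℤ, z ℓ ≠ (n : ℝ) := by
      intro ℓ hℓ n hn
      obtain ⟨h0, h1⟩ := hFrac ℓ hℓ
      rw [hn] at h0 h1
      have : (0:ℤ) < n := by exact_mod_cast h0
      have : n < 1 := by exact_mod_cast h1
      omega
    have hcompl_int : ∀ (s : Finset (Fin L)), (∀ ℓ ∈ s, ℓ ∉ F) →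
        ∃ m : ℤ, ∑ ℓ ∈ s, z ℓ = (m : ℝ) := by
      intro s hs
      apply exists_int_sum'
      intro ℓ hℓ
      have := hs ℓ hℓ
      rw [hFdef, mem_filter] at this
      push_neg at this
      rcases Decidable.em (z ℓ = 0) with h | h
      · exact ⟨0, by simp [h]⟩
      · exact ⟨1, by simp [this (mem_univ ℓ) h]⟩
    have hsumF : ∃ n : ℤ, ∑ e ∈ F, z e = (n : ℝ) := by
      obtain ⟨m, hm⟩ := hcompl_int Fᶜ (fun ℓ hℓ => mem_compl.mp hℓ)
      refine ⟨(T : ℤ) - m, ?_⟩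
      have := sum_add_sum_compl F z
      rw [hzT] at this
      push_cast
      linarith [hm ▸ this]
    -- decompose category sums
    have hdecomp : ∀ (p : Fin P) (k : Fin (K p)), ∃ m : ℤ,
        Sfun c z p k = ∑ ℓ ∈ F.filter (fun ℓ => c p ℓ = k), z ℓ + (m : ℝ) := by
      intro p k
      have hsplit : ∑ ℓ ∈ (univ.filter (fun ℓ => c p ℓ = k)).filter (fun ℓ => ℓ ∈ F), z ℓ
          + ∑ ℓ ∈ (univ.filter (fun ℓ => c p ℓ = k)).filter (fun ℓ => ℓ ∉ F), z ℓ
          = Sfun c z p k := sum_filter_add_sum_filter_not _ _ _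
      have heq : (univ.filter (fun ℓ => c p ℓ = k)).filter (fun ℓ => ℓ ∈ F)
          = F.filter (fun ℓ => c p ℓ = k) := by
        ext x
        simp only [mem_filter, mem_univ, true_and]
        tauto
      obtain ⟨m, hm⟩ := hcompl_int ((univ.filter (fun ℓ => c p ℓ = k)).filter (fun ℓ => ℓ ∉ F))
        (fun ℓ hℓ => (mem_filter.mp hℓ).2)
      refine ⟨m, ?_⟩
      rw [← hsplit, heq, hm]
    -- get the perturbation direction
    have hker : ∃ d : Fin L → ℝ, d ≠ 0 ∧ (∀ ℓ, ℓ ∉ F → d ℓ = 0) ∧ (∑ e ∈ F, d e = 0) ∧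
        (∀ (p : Fin P) (k : Fin (K p)),
          (∃ n : ℤ, ∑ e ∈ F.filter (fun e => c p e = k), z e = (n:ℝ)) →
          ∑ e ∈ F.filter (fun e => c p e = k), d e = 0) := by
      rcases (by omega : P = 0 ∨ P = 1 ∨ P = 2) with h | h | h
      · subst h
        obtain ⟨d, h1, h2, h3, -, -⟩ :=
          abstract_ker F hFne (fun _ => (0 : Fin 1)) (fun _ => (0 : Fin 1)) z hint hsumF
        exact ⟨d, h1, h2, h3, fun p => p.elim0⟩
      · subst h
        obtain ⟨d, h1, h2, h3, h4, -⟩ :=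
          abstract_ker F hFne (c 0) (fun _ => (0 : Fin 1)) z hint hsumF
        refine ⟨d, h1, h2, h3, ?_⟩
        intro p k hpk
        have hp : p = 0 := Subsingleton.elim p 0
        subst hp
        exact h4 k hpk
      · subst h
        obtain ⟨d, h1, h2, h3, h4, h5⟩ :=
          abstract_ker F hFne (c 0) (c 1) z hint hsumF
        refine ⟨d, h1, h2, h3, ?_⟩
        intro p k hpk
        fin_cases p
        · exact h4 k hpk
        · exact h5 k hpk
    obtain ⟨d, hd0, hdsupp, hdsumF, hdker⟩ := hker
    -- facts about directions supported on F
    have hδF : ∀ (e : Fin L → ℝ), (∀ ℓ, ℓ ∉ F → e ℓ = 0) → ∀ (p : Fin P) (k : Fin (K p)),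
        Sfun c e p k = ∑ x ∈ F.filter (fun x => c p x = k), e x := by
      intro e hsupp p k
      unfold Sfun
      refine (sum_subset ?_ ?_).symm
      · intro x hx
        exact mem_filter.mpr ⟨mem_univ _, (mem_filter.mp hx).2⟩
      · intro x hx hnx
        apply hsupp
        intro hxF
        exact hnx (mem_filter.mpr ⟨hxF, (mem_filter.mp hx).2⟩)
    have hsumtot : ∀ (e : Fin L → ℝ), (∀ ℓ, ℓ ∉ F → e ℓ = 0) → (∑ x ∈ F, e x = 0) →
        ∑ ℓ, e ℓ = 0 := by
      intro e hsupp hF0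
      rw [← sum_add_sum_compl F e, hF0, zero_add]
      exact sum_eq_zero (fun x hx => hsupp x (mem_compl.mp hx))
    have hpin : ∀ (p : Fin P) (k : Fin (K p)), Sfun c z p k = (N p k : ℝ) →
        Sfun c d p k = 0 := by
      intro p k hpk
      obtain ⟨m, hm⟩ := hdecomp p k
      rw [hδF d hdsupp]
      apply hdker
      refine ⟨(N p k : ℤ) - m, ?_⟩
      rw [hpk] at hm
      push_cast
      linarith
    -- choose sign so the slope is nonpositive
    obtain ⟨D, hD0, hDsupp, hDsum, hDpin, hDslope⟩ :
        ∃ D : Fin L → ℝ, D ≠ 0 ∧ (∀ ℓ, ℓ ∉ F → D ℓ = 0) ∧ (∑ ℓ, D ℓ = 0) ∧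
          (∀ (p : Fin P) (k : Fin (K p)), Sfun c z p k = (N p k : ℝ) → Sfun c D p k = 0) ∧
          (∑ p, ∑ k, Real.sign (Sfun c z p k - (N p k : ℝ)) * Sfun c D p k) ≤ 0 := by
      have hneg : ∀ (p : Fin P) (k : Fin (K p)), Sfun c (fun ℓ => -d ℓ) p k = -Sfun c d p k := by
        intro p k
        unfold Sfun
        rw [← sum_neg_distrib]
      rcases le_or_gt (∑ p, ∑ k, Real.sign (Sfun c z p k - (N p k : ℝ)) * Sfun c d p k) 0
        with hs | hs
      · exact ⟨d, hd0, hdsupp, hsumtot d hdsupp hdsumF, hpin, hs⟩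
      · refine ⟨fun ℓ => -d ℓ, ?_, fun ℓ hℓ => by simp [hdsupp ℓ hℓ], ?_, ?_, ?_⟩
        · intro hcon
          apply hd0
          ext ℓ
          have := congrFun hcon ℓ
          simp only [Pi.zero_apply] at this ⊢
          linarith
        · rw [sum_neg_distrib, hsumtot d hdsupp hdsumF, neg_zero]
        · intro p k hpk
          rw [hneg, hpin p k hpk, neg_zero]
        · have : ∀ (p : Fin P), ∑ k, Real.sign (Sfun c z p k - (N p k : ℝ)) *
              Sfun c (fun ℓ => -d ℓ) p k
              = -∑ k, Real.sign (Sfun c z p k - (N p k : ℝ)) * Sfun c d p k := by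
            intro p
            rw [← sum_neg_distrib]
            exact Finset.sum_congr rfl (fun k _ => by rw [hneg]; ring)
          rw [Finset.sum_congr rfl (fun p _ => this p), sum_neg_distrib]
          linarith
    -- candidate step sizes
    set Cb : Finset ℝ := (univ.filter (fun ℓ => D ℓ ≠ 0)).image
      (fun ℓ => if 0 < D ℓ then (1 - z ℓ) / D ℓ else z ℓ / (-D ℓ)) with hCbdef
    set Ck : Finset ℝ := ((univ : Finset ((p : Fin P) × Fin (K p))).filter
      (fun q => Sfun c D q.1 q.2 ≠ 0 ∧
        (Sfun c z q.1 q.2 - (N q.1 q.2 : ℝ)) * Sfun c D q.1 q.2 < 0)).image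
      (fun q => -(Sfun c z q.1 q.2 - (N q.1 q.2 : ℝ)) / Sfun c D q.1 q.2) with hCkdef
    have hDF : ∀ ℓ : Fin L, D ℓ ≠ 0 → ℓ ∈ F := by
      intro ℓ h
      by_contra hcon
      exact h (hDsupp ℓ hcon)
    have hCbne : Cb.Nonempty := by
      obtain ⟨ℓ, hℓ⟩ := Function.ne_iff.mp hD0
      exact ⟨_, mem_image_of_mem _ (mem_filter.mpr ⟨mem_univ _, hℓ⟩)⟩
    have hCne : (Cb ∪ Ck).Nonempty := hCbne.inl
    set t := (Cb ∪ Ck).min' hCne with htdef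
    have htle : ∀ x ∈ Cb ∪ Ck, t ≤ x := fun x hx => min'_le _ _ hx
    have htpos : 0 < t := by
      have hpos : ∀ x ∈ Cb ∪ Ck, 0 < x := by
        intro x hx
        rcases mem_union.mp hx with hx | hx
        · obtain ⟨ℓ, hℓmem, rfl⟩ := mem_image.mp hx
          have hℓD : D ℓ ≠ 0 := (mem_filter.mp hℓmem).2
          obtain ⟨h0, h1⟩ := hFrac ℓ (hDF ℓ hℓD)
          split_ifs with hsgn
          · exact div_pos (by linarith) hsgn
          · exact div_pos h0 (by rcases hℓD.lt_or_gt with h | h <;> [linarith; exact absurd h hsgn])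
        · obtain ⟨q, hqmem, rfl⟩ := mem_image.mp hx
          obtain ⟨-, -, hq2⟩ := mem_filter.mp hqmem
          rcases mul_neg_iff.mp hq2 with ⟨hs, hδ⟩ | ⟨hs, hδ⟩
          · exact div_pos_iff.mpr (Or.inr ⟨by linarith, hδ⟩)
          · exact div_pos_iff.mpr (Or.inl ⟨by linarith, hδ⟩)
      exact hpos _ (min'_mem _ _)
    -- the moved point
    have hfeas : ∀ ℓ, 0 ≤ z ℓ + t * D ℓ ∧ z ℓ + t * D ℓ ≤ 1 := by
      intro ℓ
      rcases lt_trichotomy (D ℓ) 0 with hD | hD | hD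
      · have hmem : z ℓ / (-D ℓ) ∈ Cb ∪ Ck := mem_union_left _
          (mem_image.mpr ⟨ℓ, mem_filter.mpr ⟨mem_univ _, hD.ne⟩, by rw [if_neg (not_lt.mpr hD.le)]⟩)
        have h2 : t * (-D ℓ) ≤ z ℓ := (le_div_iff₀ (by linarith)).mp (htle _ hmem)
        constructor
        · linarith
        · nlinarith [(hz01 ℓ).2, mul_pos htpos (neg_pos.mpr hD)]
      · simp [hD, hz01 ℓ]
      · have hmem : (1 - z ℓ) / D ℓ ∈ Cb ∪ Ck := mem_union_left _
          (mem_image.mpr ⟨ℓ, mem_filter.mpr ⟨mem_univ _, hD.ne'⟩, by rw [if_pos hD]⟩)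
        have h2 : t * D ℓ ≤ 1 - z ℓ := (le_div_iff₀ hD).mp (htle _ hmem)
        constructor
        · nlinarith [(hz01 ℓ).1, mul_pos htpos hD]
        · linarith
    have hfeassum : ∑ ℓ, (z ℓ + t * D ℓ) = (T : ℝ) := by
      rw [sum_add_distrib, ← mul_sum, hDsum, mul_zero, add_zero, hzT]
    have hSadd : ∀ (p : Fin P) (k : Fin (K p)),
        Sfun c (fun ℓ => z ℓ + t * D ℓ) p k = Sfun c z p k + t * Sfun c D p k := by
      intro p k
      unfold Sfun
      rw [sum_add_distrib, ← mul_sum]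
    have hrowid : ∀ (p : Fin P) (k : Fin (K p)),
        |Sfun c (fun ℓ => z ℓ + t * D ℓ) p k - (N p k : ℝ)|
          = |Sfun c z p k - (N p k : ℝ)|
            + t * (Real.sign (Sfun c z p k - (N p k : ℝ)) * Sfun c D p k) := by
      intro p k
      rw [hSadd p k]
      by_cases hδ : Sfun c D p k = 0
      · rw [hδ]; ring_nf
      have hs0 : Sfun c z p k - (N p k : ℝ) ≠ 0 := by
        intro h
        exact hδ (hDpin p k (by linarith [sub_eq_zero.mp h]))
      rcases hs0.lt_or_gt with hneg | hpos
      · rw [Real.sign_of_neg hneg]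
        have hle : Sfun c z p k + t * Sfun c D p k - (N p k : ℝ) ≤ 0 := by
          rcases lt_or_ge 0 (Sfun c D p k) with hδp | hδp
          · have hmem : -(Sfun c z p k - (N p k : ℝ)) / Sfun c D p k ∈ Cb ∪ Ck := by
              refine mem_union_right _ (mem_image.mpr ⟨⟨p, k⟩, mem_filter.mpr
                ⟨mem_univ _, hδ, by nlinarith⟩, rfl⟩)
            have h2 : t * Sfun c D p k ≤ -(Sfun c z p k - (N p k : ℝ)) :=
              (le_div_iff₀ hδp).mp (htle _ hmem)
            linarith
          · nlinarith [mul_nonpos_of_nonneg_of_nonpos htpos.le hδp]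
        rw [abs_of_nonpos hle, abs_of_neg hneg]
        ring
      · rw [Real.sign_of_pos hpos]
        have hge : 0 ≤ Sfun c z p k + t * Sfun c D p k - (N p k : ℝ) := by
          rcases lt_or_ge (Sfun c D p k) 0 with hδn | hδn
          · have hmem : -(Sfun c z p k - (N p k : ℝ)) / Sfun c D p k ∈ Cb ∪ Ck := by
              refine mem_union_right _ (mem_image.mpr ⟨⟨p, k⟩, mem_filter.mpr
                ⟨mem_univ _, hδ, by nlinarith⟩, rfl⟩)
            have h3 : t ≤ -(Sfun c z p k - (N p k : ℝ)) / Sfun c D p k := htle _ hmem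
            have h4 : -(Sfun c z p k - (N p k : ℝ)) ≤ t * Sfun c D p k :=
              (le_div_iff_of_neg hδn).mp h3
            linarith
          · nlinarith [mul_nonneg htpos.le hδn]
        rw [abs_of_nonneg hge, abs_of_pos hpos]
        ring
    have hobj : fObj c N (fun ℓ => z ℓ + t * D ℓ) ≤ fObj c N z := by
      unfold fObj
      calc ∑ p, ∑ k, |Sfun c (fun ℓ => z ℓ + t * D ℓ) p k - (N p k : ℝ)|
          = ∑ p, ∑ k, (|Sfun c z p k - (N p k : ℝ)|
              + t * (Real.sign (Sfun c z p k - (N p k : ℝ)) * Sfun c D p k)) := by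
            exact Finset.sum_congr rfl (fun p _ => Finset.sum_congr rfl
              (fun k _ => hrowid p k))
        _ = (∑ p, ∑ k, |Sfun c z p k - (N p k : ℝ)|)
              + t * ∑ p, ∑ k, Real.sign (Sfun c z p k - (N p k : ℝ)) * Sfun c D p k := by
            rw [mul_sum, ← sum_add_distrib]
            apply Finset.sum_congr rfl
            intro p _
            rw [mul_sum, ← sum_add_distrib]
        _ ≤ ∑ p, ∑ k, |Sfun c z p k - (N p k : ℝ)| := by
            nlinarith [mul_nonpos_of_nonneg_of_nonpos htpos.le hDslope]
    -- the measure strictly decreases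
    have hFsub : univ.filter (fun ℓ => (z ℓ + t * D ℓ) ≠ 0 ∧ (z ℓ + t * D ℓ) ≠ 1) ⊆ F := by
      intro ℓ hℓ
      by_contra hcon
      have hD0' : D ℓ = 0 := hDsupp ℓ hcon
      rw [mem_filter] at hℓ
      apply hcon
      rw [hFdef, mem_filter]
      refine ⟨mem_univ _, ?_⟩
      simpa [hD0'] using hℓ.2
    have hUle : ∀ (y : Fin L → ℝ),
        ∑ p, (univ.filter (fun k => Sfun c y p k ≠ (N p k : ℝ))).card ≤ R := by
      intro y
      rw [hR]
      apply sum_le_sum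
      intro p _
      calc (univ.filter (fun k => Sfun c y p k ≠ (N p k : ℝ))).card
          ≤ (univ : Finset (Fin (K p))).card := card_filter_le _ _
        _ = K p := by rw [card_univ, Fintype.card_fin]
    have hμlt : μ (fun ℓ => z ℓ + t * D ℓ) < μ z := by
      have hmemt : t ∈ Cb ∪ Ck := min'_mem _ _
      rcases mem_union.mp hmemt with hmem | hmem
      · -- a coordinate becomes integral
        obtain ⟨ℓ0, hℓ0mem, hℓ0eq⟩ := mem_image.mp hmem
        have hD0' : D ℓ0 ≠ 0 := (mem_filter.mp hℓ0mem).2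
        have hℓ0F : ℓ0 ∈ F := hDF ℓ0 hD0'
        have hz'01 : (z ℓ0 + t * D ℓ0) = 0 ∨ (z ℓ0 + t * D ℓ0) = 1 := by
          by_cases hsgn : 0 < D ℓ0
          · right
            rw [if_pos hsgn] at hℓ0eq
            rw [← hℓ0eq, div_mul_cancel₀ _ hD0']
            ring
          · left
            rw [if_neg hsgn] at hℓ0eq
            rw [← hℓ0eq, div_mul_eq_mul_div, mul_comm, ← div_mul_eq_mul_div]
            rw [div_neg, div_self hD0']
            ring
        have hℓ0notin : ℓ0 ∉ univ.filter
            (fun ℓ => (z ℓ + t * D ℓ) ≠ 0 ∧ (z ℓ + t * D ℓ) ≠ 1) := by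
          rw [mem_filter]
          rcases hz'01 with h | h <;> simp [h]
        have hcard : (univ.filter
            (fun ℓ => (z ℓ + t * D ℓ) ≠ 0 ∧ (z ℓ + t * D ℓ) ≠ 1)).card < F.card :=
          card_lt_card ((ssubset_iff_of_subset hFsub).mpr ⟨ℓ0, hℓ0F, hℓ0notin⟩)
        simp only [hμ]
        exact measure_lt1 hcard (hUle _)
      · -- a category sum becomes pinned
        obtain ⟨q0, hq0mem, hq0eq⟩ := mem_image.mp hmem
        obtain ⟨-, hq0δ, hq0s⟩ := mem_filter.mp hq0mem
        have hS' : Sfun c (fun ℓ => z ℓ + t * D ℓ) q0.1 q0.2 = (N q0.1 q0.2 : ℝ) := by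
          rw [hSadd, ← hq0eq, div_mul_cancel₀ _ hq0δ]
          ring
        have hsub2 : ∀ p : Fin P,
            (univ.filter (fun k => Sfun c (fun ℓ => z ℓ + t * D ℓ) p k ≠ (N p k : ℝ)))
            ⊆ (univ.filter (fun k => Sfun c z p k ≠ (N p k : ℝ))) := by
          intro p k hk
          rw [mem_filter] at hk ⊢
          refine ⟨mem_univ _, fun hcon => hk.2 ?_⟩
          rw [hSadd, hDpin p k hcon, mul_zero, add_zero]
          exact hcon
        have hstrict : (univ.filter
              (fun k => Sfun c (fun ℓ => z ℓ + t * D ℓ) q0.1 k ≠ (N q0.1 k : ℝ))).card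
            < (univ.filter (fun k => Sfun c z q0.1 k ≠ (N q0.1 k : ℝ))).card := by
          apply card_lt_card
          rw [ssubset_iff_of_subset (hsub2 q0.1)]
          refine ⟨q0.2, mem_filter.mpr ⟨mem_univ _, fun hcon => ?_⟩,
            fun hmem' => (mem_filter.mp hmem').2 hS'⟩
          rw [hcon] at hq0s
          simp at hq0s
        have hUlt : ∑ p, (univ.filter
              (fun k => Sfun c (fun ℓ => z ℓ + t * D ℓ) p k ≠ (N p k : ℝ))).card
            < ∑ p, (univ.filter (fun k => Sfun c z p k ≠ (N p k : ℝ))).card :=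
          sum_lt_sum (fun p _ => card_le_card (hsub2 p)) ⟨q0.1, mem_univ _, hstrict⟩
        simp only [hμ]
        exact measure_lt2 (card_le_card hFsub) hUlt
    obtain ⟨w, hw1, hw2, hw3⟩ := ih (μ (fun ℓ => z ℓ + t * D ℓ))
      (lt_of_lt_of_le hμlt hμn) _ hfeas hfeassum le_rfl
    exact ⟨w, hw1, hw2, le_trans hw3 hobj⟩

set_option maxHeartbeats 1000000 in
/-- With at most two covariates (`P ≤ 2`) and `T ≤ L`, the LP relaxation solves the
integer program: the infimum of `∑ p ∑ k, v p k` over the polyhedron `Q` equals the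
minimum total imbalance over binary selection vectors `z` summing to `T`. -/
theorem LP_solves_IP_two_covariates
    (T L P : ℕ) (hT : 0 < T) (hL : 0 < L) (hP : P ≤ 2) (hTL : T ≤ L)
    (K : Fin P → ℕ) (hK : ∀ p, 0 < K p)
    (c : ∀ p : Fin P, Fin L → Fin (K p))
    (N : ∀ p : Fin P, Fin (K p) → ℕ)
    (hN : ∀ p, ∑ k, N p k = T)
    (Q : Set ((Fin L → ℝ) × (∀ p : Fin P, Fin (K p) → ℝ)))
    (hQ : Q = {zv | (∀ ℓ, 0 ≤ zv.1 ℓ ∧ zv.1 ℓ ≤ 1) ∧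
      (∑ ℓ, zv.1 ℓ) = (T : ℝ) ∧
      ∀ p k, |(∑ ℓ ∈ Finset.univ.filter (fun ℓ => c p ℓ = k), zv.1 ℓ) - (N p k : ℝ)|
        ≤ zv.2 p k}) :
    sInf {val : ℝ | ∃ zv ∈ Q, val = ∑ p, ∑ k, zv.2 p k}
    = sInf {val : ℝ | ∃ z : Fin L → ℕ,
        (∀ ℓ, z ℓ = 0 ∨ z ℓ = 1) ∧
        (∑ ℓ, z ℓ) = T ∧
        val = ∑ p, ∑ k,
          |(∑ ℓ ∈ Finset.univ.filter (fun ℓ => c p ℓ = k), (z ℓ : ℝ)) - (N p k : ℝ)|} := by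
  classical
  set IPset : Set ℝ := {val : ℝ | ∃ z : Fin L → ℕ,
        (∀ ℓ, z ℓ = 0 ∨ z ℓ = 1) ∧
        (∑ ℓ, z ℓ) = T ∧
        val = ∑ p, ∑ k,
          |(∑ ℓ ∈ Finset.univ.filter (fun ℓ => c p ℓ = k), (z ℓ : ℝ)) - (N p k : ℝ)|}
    with hIPdef
  set LPset : Set ℝ := {val : ℝ | ∃ zv ∈ Q, val = ∑ p, ∑ k, zv.2 p k} with hLPdef
  -- the IP value of an integral vector, as fObj
  have hfObj : ∀ z : Fin L → ℕ,
      fObj c N (fun ℓ => (z ℓ : ℝ)) = ∑ p, ∑ k,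
        |(∑ ℓ ∈ Finset.univ.filter (fun ℓ => c p ℓ = k), (z ℓ : ℝ)) - (N p k : ℝ)| := by
    intro z; rfl
  -- IP points give LP points
  have hIPLP : IPset ⊆ LPset := by
    rintro val ⟨z, hz01, hzT, rfl⟩
    refine ⟨⟨fun ℓ => (z ℓ : ℝ), fun p k =>
      |(∑ ℓ ∈ Finset.univ.filter (fun ℓ => c p ℓ = k), (z ℓ : ℝ)) - (N p k : ℝ)|⟩, ?_, rfl⟩
    rw [hQ]
    refine ⟨?_, ?_, fun p k => le_refl _⟩
    · intro ℓ
      rcases hz01 ℓ with h | h <;> simp [h]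
    · push_cast [← hzT]
      rfl
  -- IPset is nonempty
  have hIPne : IPset.Nonempty := by
    refine ⟨_, ⟨fun ℓ => if (ℓ : ℕ) < T then 1 else 0,
      fun ℓ => by by_cases h : (ℓ:ℕ) < T <;> simp [h], ?_, rfl⟩⟩
    rw [Fin.sum_univ_eq_sum_range (fun i => if i < T then (1:ℕ) else 0) L] 
    rw [Finset.range_eq_Ico, ← Finset.sum_Ico_consecutive _ (Nat.zero_le T) hTL,
      ← Finset.range_eq_Ico]
    have h1 : ∑ i ∈ Finset.range T, (if i < T then (1:ℕ) else 0) = T := by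
      rw [Finset.sum_congr rfl (fun i hi => if_pos (Finset.mem_range.mp hi))]
      simp
    have h2 : ∑ i ∈ Finset.Ico T L, (if i < T then (1:ℕ) else 0) = 0 := by
      apply Finset.sum_eq_zero
      intro i hi
      rw [if_neg (not_lt.mpr (Finset.mem_Ico.mp hi).1)]
    omega
  -- IPset is finite
  have hIPfin : IPset.Finite := by
    have hfin := Set.finite_range
      (fun w : Fin L → Bool => ∑ p, ∑ k,
        |(∑ ℓ ∈ Finset.univ.filter (fun ℓ => c p ℓ = k),
          (if w ℓ then (1:ℝ) else 0)) - (N p k : ℝ)|)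
    refine hfin.subset ?_
    rintro val ⟨z, hz01, hzT, rfl⟩
    refine ⟨fun ℓ => z ℓ == 1, ?_⟩
    show (∑ p, ∑ k, |(∑ ℓ ∈ Finset.univ.filter (fun ℓ => c p ℓ = k),
          (if (z ℓ == 1) then (1:ℝ) else 0)) - (N p k : ℝ)|) = _
    refine Finset.sum_congr rfl (fun p _ => Finset.sum_congr rfl (fun k _ => ?_))
    have harg : ∀ ℓ : Fin L, (if (z ℓ == 1) then (1:ℝ) else 0) = ((z ℓ : ℕ) : ℝ) := by
      intro ℓ
      rcases hz01 ℓ with h | h <;> simp [h]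
    rw [Finset.sum_congr rfl (fun ℓ _ => harg ℓ)]
  have hMmem : sInf IPset ∈ IPset := hIPne.csInf_mem hIPfin
  -- LPset is bounded below and every LP value dominates sInf IPset
  have hLPlb : ∀ val ∈ LPset, sInf IPset ≤ val := by
    rintro val ⟨zv, hzv, rfl⟩
    rw [hQ] at hzv
    obtain ⟨hz01, hzT, hzabs⟩ := hzv
    obtain ⟨w, hw01, hwT, hwle⟩ := round_lemma T L P hP K c N zv.1 hz01 hzT
    have hwIP : fObj c N (fun ℓ => (w ℓ : ℝ)) ∈ IPset := ⟨w, hw01, hwT, hfObj w⟩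
    have h1 : sInf IPset ≤ fObj c N (fun ℓ => (w ℓ : ℝ)) :=
      csInf_le hIPfin.bddBelow hwIP
    have h2 : fObj c N zv.1 ≤ ∑ p, ∑ k, zv.2 p k := by
      unfold fObj Sfun
      exact Finset.sum_le_sum (fun p _ => Finset.sum_le_sum (fun k _ => hzabs p k))
    linarith
  have hLPbdd : BddBelow LPset := ⟨sInf IPset, fun val hval => hLPlb val hval⟩
  have hLPne : LPset.Nonempty := hIPne.mono hIPLP
  apply le_antisymm
  · exact csInf_le hLPbdd (hIPLP hMmem)
  · exact le_csInf hLPne hLPlb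
end

section
/- LP relaxation solves the integer program with nested covariates: assume the covariates are nested and T ≤ L. Then the infimum of Σ_{p ∈ Fin P} Σ_{k ∈ Fin K_p} v_{p,k} over all (z, v) ∈ Q equals the minimum of Σ_{p ∈ Fin P} Σ_{k ∈ Fin K_p} |Σ_{ℓ ∈ L_{p,k}} z_ℓ − N_{p,k}| over all z : Fin L → {0, 1} with Σ_{ℓ ∈ Fin L} z_ℓ = T. -/
/-!
Order the units lexicographically by their vectors of categories: nestedness makes every
category a block of consecutive units. Round a fractional point `z` by systematic sampling: with
offset `t`, unit `ℓ` is selected iff `(t + z(<ℓ), t + z(≤ℓ)]` contains an integer. The sum of the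
selection over a block is then the floor or the ceiling of the sum of `z` over it (so the total is
`T`), and averaging over `t ∈ [0, 1]` gives back `z`. On the box of floors and ceilings each term
`|x(S) - N_S|` is affine in `x`, so some offset does no worse than `z`; conversely every binary
point lies in `Q`.
-/

open Finset MeasureTheory

theorem intervalIntegrable_floor_add (b t₀ t₁ : ℝ) :
    IntervalIntegrable (fun t : ℝ => (⌊t + b⌋ : ℝ)) volume t₀ t₁ :=
  Monotone.intervalIntegrable fun x y hxy => Int.cast_mono (Int.floor_mono (by linarith))

theorem integral_floor_add_sub_floor (a s : ℝ) :
    ∫ t in (0 : ℝ)..1, ((⌊t + a + s⌋ : ℝ) - ⌊t + a⌋) = s := by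
  have hfloor (b : ℝ) := intervalIntegrable_floor_add b 0 1
  have hid (b : ℝ) : IntervalIntegrable (fun t : ℝ => t + b) volume 0 1 :=
    (continuous_add_const b).intervalIntegrable 0 1
  have hfract (b : ℝ) : ∫ t in (0 : ℝ)..1, Int.fract (t + b) = ∫ t in (0 : ℝ)..1, Int.fract t := by
    rw [intervalIntegral.integral_comp_add_right Int.fract b, zero_add, add_comm 1 b]
    simpa using (Int.fract_periodic ℝ).intervalIntegral_add_eq b 0
  have hfloor_eq (b : ℝ) : ∫ t in (0 : ℝ)..1, (⌊t + b⌋ : ℝ)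
      = (∫ t in (0 : ℝ)..1, (t + b)) - ∫ t in (0 : ℝ)..1, Int.fract t := by
    have h := intervalIntegral.integral_sub (hid b) (hfloor b)
    simp only [Int.self_sub_floor] at h
    linarith [hfract b]
  rw [intervalIntegral.integral_sub (by simpa [add_assoc] using hfloor (a + s)) (hfloor a)]
  simp only [add_assoc, hfloor_eq, sub_sub_sub_cancel_right]
  rw [← intervalIntegral.integral_sub (hid _) (hid _)]
  simp

theorem exists_le_intervalIntegral {g : ℝ → ℝ} (hg : IntervalIntegrable g volume 0 1) :
    ∃ t, g t ≤ ∫ t in (0 : ℝ)..1, g t := by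
  by_contra! h
  have hpos := intervalIntegral.intervalIntegral_pos_of_pos
    (hg.sub intervalIntegrable_const) (fun t => sub_pos.2 (h t)) zero_lt_one
  simp [intervalIntegral.integral_sub hg intervalIntegrable_const] at hpos

theorem Int.floor_add_sub_floor_mem_Icc {R : Type*} [Ring R] [LinearOrder R]
    [IsStrictOrderedRing R] [FloorRing R] (y s : R) : ⌊y + s⌋ - ⌊y⌋ ∈ Set.Icc ⌊s⌋ ⌈s⌉ := by
  constructor
  · linarith [Int.le_floor_add y s]
  · have := Int.floor_mono (add_le_add_right (Int.le_ceil s) y : y + s ≤ y + ⌈s⌉)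
    rw [Int.floor_add_intCast] at this
    linarith

theorem abs_sub_intCast_eq_of_mem_Icc {m N : ℤ} {u : ℝ} (hu : u ∈ Set.Icc (m : ℝ) (m + 1)) :
    |u - N| = (if N ≤ m then 1 else -1) * (u - N) := by
  split_ifs with h
  · have : (N : ℝ) ≤ m := by exact_mod_cast h
    rw [abs_of_nonneg (by linarith [hu.1])]; ring
  · have : (m : ℝ) + 1 ≤ N := by exact_mod_cast (not_le.mp h)
    rw [abs_of_nonpos (by linarith [hu.2])]; ring

theorem Pi.lex_apply_eq_of_le_of_le {ι : Type*} [LinearOrder ι] [WellFoundedLT ι]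
    {β : ι → Type*} [∀ i, LinearOrder (β i)] {f g h : ∀ i, β i}
    (hfg : toLex f ≤ toLex g) (hgh : toLex g ≤ toLex h) {p : ι} (hfh : ∀ i ≤ p, f i = h i)
    {i : ι} (hi : i ≤ p) : g i = f i := by
  by_contra hne
  have hfg' : toLex f < toLex g := hfg.lt_of_ne fun heq => hne (by rw [toLex_inj.mp heq])
  obtain ⟨i₁, hfg₁, hlt₁⟩ : ∃ i₁, (∀ j < i₁, f j = g j) ∧ f i₁ < g i₁ := hfg'
  have hi₁ : i₁ ≤ p := (not_lt.mp fun hlt => hne (hfg₁ i hlt).symm).trans hi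
  have hgh' : toLex g < toLex h :=
    hgh.lt_of_ne fun heq => hlt₁.ne' (by rw [toLex_inj.mp heq, hfh i₁ hi₁])
  obtain ⟨i₂, hgh₂, hlt₂⟩ : ∃ i₂, (∀ j < i₂, g j = h j) ∧ g i₂ < h i₂ := hgh'
  rcases lt_trichotomy i₁ i₂ with h₁₂ | rfl | h₂₁
  · exact hlt₁.ne' (by rw [hgh₂ i₁ h₁₂, hfh i₁ hi₁])
  · exact (hlt₁.trans hlt₂).ne (hfh i₁ hi₁)
  · exact hlt₂.ne (by rw [← hfg₁ i₂ h₂₁, hfh i₂ (h₂₁.le.trans hi₁)])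

section Rank

variable {ι α : Type*} [Fintype ι] [LinearOrder α] {r : ι → α}

def rankPrefixSum (r : ι → α) (z : ι → ℝ) (ℓ : ι) : ℝ :=
  ∑ m ∈ univ.filter (fun m => r m < r ℓ), z m

def IsRankInterval (r : ι → α) (S : Finset ι) : Prop :=
  ∀ a ∈ S, ∀ b ∈ S, ∀ m, r a ≤ r m → r m ≤ r b → m ∈ S

theorem sum_filter_rank_lt_telescope {β : Type*} [AddCommGroup β] (hr : Function.Injective r)
    (z : ι → ℝ) (G : ℝ → β) (b : ι) :
    ∑ m ∈ univ.filter (fun m => r m < r b),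
        (G (rankPrefixSum r z m + z m) - G (rankPrefixSum r z m))
      = G (rankPrefixSum r z b) - G 0 := by
  classical
  suffices ∀ s : Finset ι, ∀ b, univ.filter (fun m => r m < r b) = s →
      ∑ m ∈ s, (G (rankPrefixSum r z m + z m) - G (rankPrefixSum r z m))
        = G (rankPrefixSum r z b) - G 0 from this _ b rfl
  intro s
  induction s using Finset.induction_on_max_value r with
  | empty => intro b hb; simp [rankPrefixSum, hb]
  | insert a s ha hmax ih =>
    intro b hb
    have hab : r a < r b := by
      have : a ∈ univ.filter (fun m => r m < r b) := hb ▸ mem_insert_self a s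
      simpa using this
    have hs : univ.filter (fun m => r m < r a) = s := by
      ext m
      simp only [mem_filter, mem_univ, true_and]
      refine ⟨fun hm => ?_, fun hm => (hmax m hm).lt_of_ne fun h => ha (hr h ▸ hm)⟩
      have : m ∈ insert a s := by simpa [← hb] using hm.trans hab
      exact (mem_insert.mp this).resolve_left (by rintro rfl; exact hm.false)
    have hprefix : rankPrefixSum r z b = rankPrefixSum r z a + z a := by
      rw [rankPrefixSum, hb, sum_insert ha, rankPrefixSum, hs, add_comm]
    rw [sum_insert ha, ih a hs, hprefix]
    abel

theorem IsRankInterval.exists_sum_telescope {β : Type*} [AddCommGroup β]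
    (hr : Function.Injective r) {S : Finset ι} (hS : IsRankInterval r S) (z : ι → ℝ)
    (G : ℝ → β) :
    ∃ y, ∑ m ∈ S, (G (rankPrefixSum r z m + z m) - G (rankPrefixSum r z m))
      = G (y + ∑ m ∈ S, z m) - G y := by
  classical
  rcases S.eq_empty_or_nonempty with rfl | hne
  · exact ⟨0, by simp⟩
  obtain ⟨a, haS, hmin⟩ := S.exists_min_image r hne
  obtain ⟨b, hbS, hmax⟩ := S.exists_max_image r hne
  have hsplit : insert b (univ.filter (fun m => r m < r b))
      = S ∪ univ.filter (fun m => r m < r a) := by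
    ext m
    simp only [mem_insert, mem_union, mem_filter, mem_univ, true_and]
    constructor
    · rintro (rfl | hm)
      · exact Or.inl hbS
      · by_cases h : r m < r a
        · exact Or.inr h
        · exact Or.inl (hS a haS b hbS m (not_lt.mp h) hm.le)
    · rintro (hm | hm)
      · exact (hmax m hm).eq_or_lt.imp (fun h => hr h) id
      · exact Or.inr (hm.trans_le (hmax a haS))
  have hdisj : Disjoint S (univ.filter (fun m => r m < r a)) :=
    disjoint_left.mpr fun m hm => by simpa using hmin m hm
  have hb : b ∉ univ.filter (fun m => r m < r b) := by simp
  have hD := congrArg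
    (∑ m ∈ ·, (G (rankPrefixSum r z m + z m) - G (rankPrefixSum r z m))) hsplit
  have hz := congrArg (∑ m ∈ ·, z m) hsplit
  simp only [sum_insert hb, sum_union hdisj] at hD hz
  rw [sum_filter_rank_lt_telescope hr, sum_filter_rank_lt_telescope hr] at hD
  refine ⟨rankPrefixSum r z a, ?_⟩
  rw [show rankPrefixSum r z a + ∑ m ∈ S, z m = rankPrefixSum r z b + z b by
    simp only [rankPrefixSum] at hz ⊢; linarith]
  rw [eq_sub_of_add_eq hD.symm]
  abel

noncomputable def systematicRound (r : ι → α) (z : ι → ℝ) (t : ℝ) (ℓ : ι) : ℤ :=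
  ⌊t + rankPrefixSum r z ℓ + z ℓ⌋ - ⌊t + rankPrefixSum r z ℓ⌋

theorem systematicRound_eq_zero_or_eq_one {z : ι → ℝ} {ℓ : ι} (hz : 0 ≤ z ℓ ∧ z ℓ ≤ 1) (t : ℝ) :
    systematicRound r z t ℓ = 0 ∨ systematicRound r z t ℓ = 1 := by
  obtain ⟨hlo, hhi⟩ := Int.floor_add_sub_floor_mem_Icc (t + rankPrefixSum r z ℓ) (z ℓ)
  have h₀ : 0 ≤ ⌊z ℓ⌋ := Int.floor_nonneg.mpr hz.1
  have h₁ : ⌈z ℓ⌉ ≤ 1 := Int.ceil_le.mpr (by exact_mod_cast hz.2)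
  unfold systematicRound
  omega

theorem IsRankInterval.sum_systematicRound_mem_Icc (hr : Function.Injective r) {S : Finset ι}
    (hS : IsRankInterval r S) (z : ι → ℝ) (t : ℝ) :
    ∑ m ∈ S, systematicRound r z t m ∈ Set.Icc ⌊∑ m ∈ S, z m⌋ ⌈∑ m ∈ S, z m⌉ := by
  obtain ⟨y, hy⟩ := hS.exists_sum_telescope hr z (fun u => ⌊t + u⌋)
  simp only [← add_assoc] at hy
  simp only [systematicRound]
  rw [hy]
  exact Int.floor_add_sub_floor_mem_Icc _ _

theorem integral_systematicRound (z : ι → ℝ) (ℓ : ι) :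
    ∫ t in (0 : ℝ)..1, (systematicRound r z t ℓ : ℝ) = z ℓ := by
  simp only [systematicRound, Int.cast_sub]
  exact integral_floor_add_sub_floor _ _

theorem exists_sum_mul_systematicRound_le (z w : ι → ℝ) :
    ∃ t, ∑ ℓ, w ℓ * systematicRound r z t ℓ ≤ ∑ ℓ, w ℓ * z ℓ := by
  have hint (ℓ : ι) :
      IntervalIntegrable (fun t => w ℓ * (systematicRound r z t ℓ : ℝ)) volume 0 1 := by
    simp only [systematicRound, Int.cast_sub, add_assoc]
    exact ((intervalIntegrable_floor_add _ 0 1).sub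
      (intervalIntegrable_floor_add _ 0 1)).const_mul _
  obtain ⟨t, ht⟩ := exists_le_intervalIntegral (IntervalIntegrable.sum univ fun ℓ _ => hint ℓ)
  refine ⟨t, ?_⟩
  simpa [intervalIntegral.integral_finsetSum fun ℓ _ => hint ℓ, integral_systematicRound] using ht

theorem exists_systematicRound_imbalance_le (hr : Function.Injective r) {σ : Type*} [Fintype σ]
    (S : σ → Finset ι) (hS : ∀ j, IsRankInterval r (S j)) (N : σ → ℤ) (z : ι → ℝ) :
    ∃ t, ∑ j, |∑ ℓ ∈ S j, (systematicRound r z t ℓ : ℝ) - N j|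
      ≤ ∑ j, |∑ ℓ ∈ S j, z ℓ - N j| := by
  classical
  -- On the unit box above `⌊z(S j)⌋` the `j`-th term is affine with slope `s j`.
  set s : σ → ℝ := fun j => if N j ≤ ⌊∑ ℓ ∈ S j, z ℓ⌋ then 1 else -1
  have hswap (f : ι → ℝ) : ∑ j, s j * (∑ ℓ ∈ S j, f ℓ - N j)
      = ∑ ℓ, (∑ j, if ℓ ∈ S j then s j else 0) * f ℓ - ∑ j, s j * N j := by
    simp only [mul_sub, sum_sub_distrib, mul_sum, sum_mul, ite_mul, zero_mul]
    rw [sum_comm (s := univ) (t := univ)]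
    simp [sum_ite_mem]
  obtain ⟨t, ht⟩ := exists_sum_mul_systematicRound_le (r := r) z
    (fun ℓ => ∑ j, if ℓ ∈ S j then s j else 0)
  refine ⟨t, ?_⟩
  have hx (j : σ) : ∑ ℓ ∈ S j, (systematicRound r z t ℓ : ℝ)
      ∈ Set.Icc (⌊∑ ℓ ∈ S j, z ℓ⌋ : ℝ) (⌊∑ ℓ ∈ S j, z ℓ⌋ + 1) := by
    obtain ⟨hlo, hhi⟩ := (hS j).sum_systematicRound_mem_Icc hr z t
    have := Int.ceil_le_floor_add_one (∑ ℓ ∈ S j, z ℓ)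
    rw [← Int.cast_sum]
    exact ⟨by exact_mod_cast hlo, by exact_mod_cast hhi.trans this⟩
  have hz (j : σ) : ∑ ℓ ∈ S j, z ℓ ∈ Set.Icc (⌊∑ ℓ ∈ S j, z ℓ⌋ : ℝ) (⌊∑ ℓ ∈ S j, z ℓ⌋ + 1) :=
    ⟨Int.floor_le _, (Int.lt_floor_add_one _).le⟩
  calc ∑ j, |∑ ℓ ∈ S j, (systematicRound r z t ℓ : ℝ) - N j|
      = ∑ j, s j * (∑ ℓ ∈ S j, (systematicRound r z t ℓ : ℝ) - N j) :=
        sum_congr rfl fun j _ => abs_sub_intCast_eq_of_mem_Icc (hx j)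
    _ ≤ ∑ j, s j * (∑ ℓ ∈ S j, z ℓ - N j) := by rw [hswap, hswap]; linarith
    _ = ∑ j, |∑ ℓ ∈ S j, z ℓ - N j| :=
        (sum_congr rfl fun j _ => abs_sub_intCast_eq_of_mem_Icc (hz j)).symm

theorem exists_binary_imbalance_le (hr : Function.Injective r) {σ : Type*} [Fintype σ]
    (S : σ → Finset ι) (hS : ∀ j, IsRankInterval r (S j)) (N : σ → ℤ) {z : ι → ℝ}
    (hz : ∀ ℓ, 0 ≤ z ℓ ∧ z ℓ ≤ 1) {T : ℕ} (hT : ∑ ℓ, z ℓ = T) :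
    ∃ x : ι → ℕ, (∀ ℓ, x ℓ = 0 ∨ x ℓ = 1) ∧ ∑ ℓ, x ℓ = T ∧
      ∑ j, |∑ ℓ ∈ S j, (x ℓ : ℝ) - N j| ≤ ∑ j, |∑ ℓ ∈ S j, z ℓ - N j| := by
  obtain ⟨t, ht⟩ := exists_systematicRound_imbalance_le hr S hS N z
  have h01 (ℓ : ι) := systematicRound_eq_zero_or_eq_one (r := r) (hz ℓ) t
  have hcast (ℓ : ι) : ((systematicRound r z t ℓ).toNat : ℤ) = systematicRound r z t ℓ :=
    Int.toNat_of_nonneg (by rcases h01 ℓ with h | h <;> omega)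
  refine ⟨fun ℓ => (systematicRound r z t ℓ).toNat,
    fun ℓ => by rcases h01 ℓ with h | h <;> simp [h], ?_, ?_⟩
  · have huniv : IsRankInterval r univ := fun _ _ _ _ m _ _ => mem_univ m
    have := huniv.sum_systematicRound_mem_Icc hr z t
    rw [hT, Int.floor_natCast, Int.ceil_natCast, Set.Icc_self, Set.mem_singleton_iff] at this
    have : ((∑ ℓ, (systematicRound r z t ℓ).toNat : ℕ) : ℤ) = T := by push_cast [hcast]; exact this
    exact_mod_cast this
  · simpa only [show ∀ ℓ, ((systematicRound r z t ℓ).toNat : ℝ) = systematicRound r z t ℓ from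
      fun ℓ => by exact_mod_cast hcast ℓ] using ht

end Rank

section Nested

variable {ι π : Type*} {κ : π → Type*}

def categoryRank (c : ∀ p, ι → κ p) (ℓ : ι) : Lex (∀ p, κ p) ×ₗ ι :=
  toLex (toLex fun p => c p ℓ, ℓ)

theorem categoryRank_injective (c : ∀ p, ι → κ p) : Function.Injective (categoryRank c) :=
  fun _ _ h => congrArg (fun x => (ofLex x).2) h

variable [Fintype ι] [LinearOrder ι] [LinearOrder π] [WellFoundedLT π] [∀ p, LinearOrder (κ p)]

theorem isRankInterval_categoryRank {c : ∀ p, ι → κ p}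
    (hnested : ∀ i j, i < j → ∀ k : κ j, ∃ k' : κ i, ∀ ℓ, c j ℓ = k → c i ℓ = k')
    (p : π) (k : κ p) : IsRankInterval (categoryRank c) (univ.filter (c p · = k)) := by
  intro a ha b hb m ham hmb
  simp only [mem_filter, mem_univ, true_and] at ha hb ⊢
  have hab (i : π) (hi : i ≤ p) : c i a = c i b := by
    rcases hi.lt_or_eq with hlt | rfl
    · obtain ⟨k', hk'⟩ := hnested i p hlt k
      rw [hk' a ha, hk' b hb]
    · rw [ha, hb]
  rw [← ha]
  exact Pi.lex_apply_eq_of_le_of_le (Prod.Lex.monotone_fst _ _ ham)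
    (Prod.Lex.monotone_fst _ _ hmb) hab le_rfl

end Nested

theorem LP_solves_IP_nested_covariates_general
    (T L P : ℕ)
    (K : Fin P → ℕ)
    (c : ∀ p : Fin P, Fin L → Fin (K p))
    (hnested : ∀ i j : Fin P, i < j → ∀ k : Fin (K j),
      ∃ k' : Fin (K i), ∀ ℓ, c j ℓ = k → c i ℓ = k')
    (N : ∀ p : Fin P, Fin (K p) → ℕ)
    (Q : Set ((Fin L → ℝ) × (∀ p : Fin P, Fin (K p) → ℝ)))
    (hQ : Q = {zv | (∀ ℓ, 0 ≤ zv.1 ℓ ∧ zv.1 ℓ ≤ 1) ∧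
      (∑ ℓ, zv.1 ℓ) = (T : ℝ) ∧
      ∀ p k, |(∑ ℓ ∈ Finset.univ.filter (fun ℓ => c p ℓ = k), zv.1 ℓ) - (N p k : ℝ)|
        ≤ zv.2 p k}) :
    sInf {val : ℝ | ∃ zv ∈ Q, val = ∑ p, ∑ k, zv.2 p k}
    = sInf {val : ℝ | ∃ z : Fin L → ℕ,
        (∀ ℓ, z ℓ = 0 ∨ z ℓ = 1) ∧
        (∑ ℓ, z ℓ) = T ∧
        val = ∑ p, ∑ k,
          |(∑ ℓ ∈ Finset.univ.filter (fun ℓ => c p ℓ = k), (z ℓ : ℝ)) - (N p k : ℝ)|} := by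
  subst hQ
  apply csInf_eq_csInf_of_forall_exists_le
  · rintro _ ⟨⟨z, v⟩, ⟨hz, hzsum, hv⟩, rfl⟩
    obtain ⟨x, hx01, hxsum, hxz⟩ := exists_binary_imbalance_le (categoryRank_injective c)
      (fun j : Σ p, Fin (K p) => univ.filter (c j.1 · = j.2))
      (fun j => isRankInterval_categoryRank hnested j.1 j.2) (fun j => N j.1 j.2) hz hzsum
    simp only [Fintype.sum_sigma, Int.cast_natCast] at hxz
    exact ⟨_, ⟨x, hx01, hxsum, rfl⟩,
      hxz.trans (sum_le_sum fun p _ => sum_le_sum fun k _ => hv p k)⟩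
  · rintro _ ⟨x, hx01, hxsum, rfl⟩
    refine ⟨_, ⟨(fun ℓ => (x ℓ : ℝ),
      fun p k => |(∑ ℓ ∈ univ.filter (c p · = k), (x ℓ : ℝ)) - (N p k : ℝ)|),
      ⟨fun ℓ => ?_, by dsimp only; exact_mod_cast hxsum, fun p k => le_rfl⟩, rfl⟩, le_rfl⟩
    rcases hx01 ℓ with h | h <;> simp [h]

/-- With nested covariates and `T ≤ L`, the LP relaxation solves the integer program:
the infimum of `∑ p ∑ k, v p k` over the polyhedron `Q` equals the minimum total
imbalance over binary selection vectors `z` summing to `T`. -/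
theorem LP_solves_IP_nested_covariates
    (T L P : ℕ) (hT : 0 < T) (hL : 0 < L) (hTL : T ≤ L)
    (K : Fin P → ℕ) (hK : ∀ p, 0 < K p)
    (c : ∀ p : Fin P, Fin L → Fin (K p))
    (hnested : ∀ i j : Fin P, i < j → ∀ k : Fin (K j),
      ∃ k' : Fin (K i), ∀ ℓ, c j ℓ = k → c i ℓ = k')
    (N : ∀ p : Fin P, Fin (K p) → ℕ)
    (hN : ∀ p, ∑ k, N p k = T)
    (Q : Set ((Fin L → ℝ) × (∀ p : Fin P, Fin (K p) → ℝ)))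
    (hQ : Q = {zv | (∀ ℓ, 0 ≤ zv.1 ℓ ∧ zv.1 ℓ ≤ 1) ∧
      (∑ ℓ, zv.1 ℓ) = (T : ℝ) ∧
      ∀ p k, |(∑ ℓ ∈ Finset.univ.filter (fun ℓ => c p ℓ = k), zv.1 ℓ) - (N p k : ℝ)|
        ≤ zv.2 p k}) :
    sInf {val : ℝ | ∃ zv ∈ Q, val = ∑ p, ∑ k, zv.2 p k}
    = sInf {val : ℝ | ∃ z : Fin L → ℕ,
        (∀ ℓ, z ℓ = 0 ∨ z ℓ = 1) ∧
        (∑ ℓ, z ℓ) = T ∧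
        val = ∑ p, ∑ k,
          |(∑ ℓ ∈ Finset.univ.filter (fun ℓ => c p ℓ = k), (z ℓ : ℝ)) - (N p k : ℝ)|} :=
  LP_solves_IP_nested_covariates_general T L P K c hnested N Q hQ
end
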